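/- arXiv:math/0606775 — 11 statements merged into one kernel-verified Lean document; each statement's English description precedes it below -/
import Mathlib

section
/- For all integers m, the sequence defined by x_{m-1} x_{m+1} = x_m^2 + 1 with initial rational function values x_1, x_2 (indeterminates) satisfies: every x_m is a Laurent polynomial in x_1 and x_2 with integer coefficients. -/
noncomputable abbrev K : Type := FractionRing (MvPolynomial (Fin 2) ℚ)

noncomputable def X1 : K := algebraMap (MvPolynomial (Fin 2) ℚ) K (MvPolynomial.X 0)

noncomputable def X2 : K := algebraMap (MvPolynomial (Fin 2) ℚ) K (MvPolynomial.X 1)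

/-!
The ratio `(x (m+1) + x (m-1)) / x m` is independent of `m`: subtracting two consecutive
instances of the exchange relation gives `x (m+1) (x (m+1) + x (m-1)) = x m (x (m+2) + x m)`.
Hence the sequence satisfies the linear recurrence `x (m+1) = c x m - x (m-1)` with constant
`c = (x₁² + x₂² + 1) / (x₁ x₂)`, itself a Laurent polynomial, and Laurent polynomials form a ring.
-/

namespace RingHom

variable {A R : Type*} [CommRing A] [CommRing R]

/-- When `f d` is a unit, this is the image of the localization `A[1/d]`. -/
def awayRange (f : A →+* R) (d : A) : Subring R where
  carrier := {y | ∃ (n : ℕ) (p : A), f d ^ n * y = f p}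
  mul_mem' := by
    rintro y z ⟨n, p, hp⟩ ⟨k, q, hq⟩
    exact ⟨n + k, p * q, by rw [map_mul, ← hp, ← hq]; ring⟩
  one_mem' := ⟨0, 1, by simp⟩
  add_mem' := by
    rintro y z ⟨n, p, hp⟩ ⟨k, q, hq⟩
    refine ⟨n + k, d ^ k * p + d ^ n * q, ?_⟩
    rw [map_add, map_mul, map_mul, map_pow, map_pow, ← hp, ← hq]
    ring
  zero_mem' := ⟨0, 0, by simp⟩
  neg_mem' := by
    rintro y ⟨n, p, hp⟩
    exact ⟨n, -p, by rw [map_neg, ← hp, mul_neg]⟩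

theorem mem_awayRange {f : A →+* R} {d : A} {y : R} :
    y ∈ f.awayRange d ↔ ∃ (n : ℕ) (p : A), f d ^ n * y = f p :=
  Iff.rfl

theorem apply_mem_awayRange (f : A →+* R) (d p : A) : f p ∈ f.awayRange d :=
  ⟨0, p, by rw [pow_zero, one_mul]⟩

end RingHom

theorem add_eq_mul_of_mul_eq_sq_add_one {F : Type*} [Field F] {x : ℤ → F} (hxnz : ∀ m, x m ≠ 0)
    (hrec : ∀ m, x (m - 1) * x (m + 1) = x m ^ 2 + 1) :
    ∀ m, x (m + 1) + x (m - 1) = (x 2 + x 0) / x 1 * x m := by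
  set g : ℤ → F := fun m => (x (m + 1) + x (m - 1)) / x m
  have hg : Function.Periodic g 1 := by
    intro m
    have h₁ := hrec m
    have h₂ := hrec (m + 1)
    simp only [g, add_sub_cancel_right, add_assoc, one_add_one_eq_two] at h₂ ⊢
    rw [div_eq_div_iff (hxnz _) (hxnz _)]
    linear_combination h₂ - h₁
  intro m
  have h : g m = g 1 := by simpa using (hg.sub_int_mul_eq (x := m) (m - 1)).symm
  simp only [g, sub_self, one_add_one_eq_two] at h
  rw [← h, div_mul_cancel₀ _ (hxnz m)]

theorem Subring.forall_mem_of_add_eq_mul {R : Type*} [CommRing R] (S : Subring R) {x : ℤ → R}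
    {c : R} (hc : c ∈ S) (h₁ : x 1 ∈ S) (h₂ : x 2 ∈ S)
    (hrec : ∀ m, x (m + 1) + x (m - 1) = c * x m) (m : ℤ) : x m ∈ S := by
  suffices x m ∈ S ∧ x (m + 1) ∈ S from this.1
  refine Int.inductionOn' m 1 ⟨h₁, h₂⟩ ?_ ?_
  · rintro k - ⟨hk, hk₁⟩
    have h := hrec (k + 1)
    rw [add_sub_cancel_right] at h
    rw [eq_sub_of_add_eq h]
    exact ⟨hk₁, S.sub_mem (S.mul_mem hc hk₁) hk⟩
  · rintro k - ⟨hk, hk₁⟩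
    rw [sub_add_cancel, eq_sub_of_add_eq' (hrec k)]
    exact ⟨S.sub_mem (S.mul_mem hc hk) hk₁, hk⟩

open MvPolynomial in
theorem cluster_laurent (x : ℤ → K) (hx1 : x 1 = X1) (hx2 : x 2 = X2)
    (hxnz : ∀ m : ℤ, x m ≠ 0)
    (hrec : ∀ m : ℤ, x (m - 1) * x (m + 1) = x m ^ 2 + 1) :
    ∀ m : ℤ, ∃ (p : MvPolynomial (Fin 2) ℤ) (a b : ℕ),
      X1 ^ a * X2 ^ b * x m =
        algebraMap (MvPolynomial (Fin 2) ℚ) K (p.map (Int.castRingHom ℚ)) := by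
  set ψ : MvPolynomial (Fin 2) ℤ →+* K :=
    (algebraMap (MvPolynomial (Fin 2) ℚ) K).comp (map (Int.castRingHom ℚ))
  have hψX₀ : ψ (X 0) = x 1 := by simp [ψ, hx1, X1]
  have hψX₁ : ψ (X 1) = x 2 := by simp [ψ, hx2, X2]
  have hψd : ψ (X 0 * X 1) = X1 * X2 := by rw [map_mul, hψX₀, hψX₁, hx1, hx2]
  have hc : (x 2 + x 0) / x 1 ∈ ψ.awayRange (X 0 * X 1) := by
    refine RingHom.mem_awayRange.2 ⟨1, X 0 ^ 2 + X 1 ^ 2 + 1, ?_⟩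
    rw [pow_one, hψd, ← hx1, ← hx2]
    simp only [map_add, map_pow, map_one, hψX₀, hψX₁]
    have h := hrec 1
    rw [sub_self, one_add_one_eq_two] at h
    field_simp [hxnz 1]
    linear_combination h
  intro m
  obtain ⟨n, p, hp⟩ := RingHom.mem_awayRange.1 <|
    (ψ.awayRange (X 0 * X 1)).forall_mem_of_add_eq_mul hc
    (hψX₀ ▸ ψ.apply_mem_awayRange _ _) (hψX₁ ▸ ψ.apply_mem_awayRange _ _)
    (add_eq_mul_of_mul_eq_sq_add_one hxnz hrec) m
  exact ⟨p, n, n, by rw [← mul_pow, ← hψd, hp]; rfl⟩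
end

section
/- With s_1 = (x_1^2 + x_2^2 + 1)/(x_1 x_2), the identity x_{m+1} = s_1 x_m - x_{m-1} holds for all m ∈ ℤ. -/
/-!
Subtracting the relation `x (m-1) x (m+1) = x m ^ 2 + c` at `m` and at `m + 1` gives
`x (m+1) (x (m-1) + x (m+1)) = x m (x m + x (m+2))`, so the ratio `(x (m-1) + x (m+1)) / x m`
does not depend on `m`. Its value at `m = 1` is `s₁`, because `x 0 = (x 1 ^ 2 + 1) / x 2`.
-/

section
variable {R : Type*} [CommRing R] {x : ℤ → R} {c : R}

lemma add_mul_eq_add_mul_of_mul_eq_sq_add (hrec : ∀ m, x (m - 1) * x (m + 1) = x m ^ 2 + c)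
    (m : ℤ) : (x (m - 1) + x (m + 1)) * x (m + 1) = (x m + x (m + 2)) * x m := by
  have hnext := hrec (m + 1)
  rw [add_sub_cancel_right, add_assoc, one_add_one_eq_two] at hnext
  linear_combination hrec m - hnext

end

section
variable {F : Type*} [Field F] {x : ℤ → F} {c : F}

lemma div_eq_div_of_mul_eq_sq_add (hx : ∀ m, x m ≠ 0)
    (hrec : ∀ m, x (m - 1) * x (m + 1) = x m ^ 2 + c) (m : ℤ) :
    (x (m - 1) + x (m + 1)) / x m = (x m + x (m + 2)) / x (m + 1) := by
  rw [div_eq_div_iff (hx m) (hx (m + 1))]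
  exact add_mul_eq_add_mul_of_mul_eq_sq_add hrec m

lemma eq_mul_sub_of_mul_eq_sq_add (hx : ∀ m, x m ≠ 0)
    (hrec : ∀ m, x (m - 1) * x (m + 1) = x m ^ 2 + c) (m : ℤ) :
    x (m + 1) = (x 0 + x 2) / x 1 * x m - x (m - 1) := by
  have hconst : Function.Periodic (fun m ↦ (x (m - 1) + x (m + 1)) / x m) 1 := fun m ↦ by
    simpa [add_assoc, one_add_one_eq_two] using (div_eq_div_of_mul_eq_sq_add hx hrec m).symm
  have hm : (x (m - 1) + x (m + 1)) / x m = (x 0 + x 2) / x 1 := by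
    simpa using hconst.int_mul (m - 1) 1
  rw [← hm, div_mul_cancel₀ _ (hx m)]
  ring

end

theorem linear_recurrence_general (x : ℤ → K)
    (hxnz : ∀ m : ℤ, x m ≠ 0)
    (hrec : ∀ m : ℤ, x (m - 1) * x (m + 1) = x m ^ 2 + 1) :
    ∀ m : ℤ, x (m + 1) = (x 1 ^ 2 + x 2 ^ 2 + 1) / (x 1 * x 2) * x m - x (m - 1) := by
  have hx0 : x 0 = (x 1 ^ 2 + 1) / x 2 := by
    rw [eq_div_iff (hxnz 2)]
    simpa using hrec 1
  have hs : (x 0 + x 2) / x 1 = (x 1 ^ 2 + x 2 ^ 2 + 1) / (x 1 * x 2) := by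
    rw [hx0]
    field_simp [hxnz 1, hxnz 2]
    ring
  intro m
  rw [← hs]
  exact eq_mul_sub_of_mul_eq_sq_add hxnz hrec m

theorem linear_recurrence (x : ℤ → K) (hx1 : x 1 = X1) (hx2 : x 2 = X2)
    (hxnz : ∀ m : ℤ, x m ≠ 0)
    (hrec : ∀ m : ℤ, x (m - 1) * x (m + 1) = x m ^ 2 + 1) :
    ∀ m : ℤ, x (m + 1) = (x 1 ^ 2 + x 2 ^ 2 + 1) / (x 1 * x 2) * x m - x (m - 1) :=
  linear_recurrence_general x hxnz hrec
end

section
/- For all n ≥ 0, the identity x_1 x_{n+3} = s_n + x_2 x_{n+2} holds. -/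
theorem x1_xn_identity (x : ℤ → K) (hx1 : x 1 = X1) (hx2 : x 2 = X2)
    (hxnz : ∀ m : ℤ, x m ≠ 0)
    (hrec : ∀ m : ℤ, x (m - 1) * x (m + 1) = x m ^ 2 + 1)
    (s : ℤ → K) (hsm1 : s (-1) = 0) (hs0 : s 0 = 1)
    (hs1 : s 1 = x 0 * x 3 - x 1 * x 2)
    (hsrec : ∀ n : ℤ, 2 ≤ n → s n = s 1 * s (n - 1) - s (n - 2)) :
    ∀ n : ℕ, x 1 * x ((n : ℤ) + 3) = s (n : ℤ) + x 2 * x ((n : ℤ) + 2) := by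
  have h1 : x 0 * x 2 = x 1 ^ 2 + 1 := by have h := hrec 1; norm_num at h; exact h
  have h2 : x 1 * x 3 = x 2 ^ 2 + 1 := by have h := hrec 2; norm_num at h; exact h
  -- key: s 1 * x 2 = x 1 + x 3
  have hc : s 1 * x 2 = x 1 + x 3 := by
    linear_combination x 2 * hs1 + x 3 * h1 + x 1 * h2
  -- linear recurrence
  have L : ∀ k : ℕ, x ((k : ℤ) + 3) = s 1 * x ((k : ℤ) + 2) - x ((k : ℤ) + 1) := by
    intro k
    induction k with
    | zero =>
      norm_num
      linear_combination -hc
    | succ k IH =>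
      push_cast at IH ⊢
      set N : ℤ := (k : ℤ) with hN
      have hm1 := hrec (N + 2)
      have hm2 := hrec (N + 3)
      rw [show (N + 2 - 1 : ℤ) = N + 1 by ring, show (N + 2 + 1 : ℤ) = N + 3 by ring] at hm1
      rw [show (N + 3 - 1 : ℤ) = N + 2 by ring, show (N + 3 + 1 : ℤ) = N + 4 by ring] at hm2
      rw [show (N + 1 + 3 : ℤ) = N + 4 by ring, show (N + 1 + 2 : ℤ) = N + 3 by ring,
        show (N + 1 + 1 : ℤ) = N + 2 by ring]
      apply mul_left_cancel₀ (hxnz (N + 2))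
      linear_combination hm2 - hm1 + x (N + 3) * IH
  intro n
  induction n using Nat.twoStepInduction with
  | zero =>
    push_cast
    norm_num
    rw [hs0]
    linear_combination h2
  | one =>
    push_cast
    norm_num
    have h3 : x 2 * x 4 = x 3 ^ 2 + 1 := by have h := hrec 3; norm_num at h; exact h
    apply mul_left_cancel₀ (hxnz 2)
    linear_combination x 1 * h3 - x 3 * h1 - (x 1 - x 3) * h2 - x 2 * hs1
  | more n IH1 IH2 =>
    push_cast at IH1 IH2 ⊢
    set N : ℤ := (n : ℤ) with hN
    have hL1 := L (n + 1)
    have hL2 := L (n + 2)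
    push_cast at hL1 hL2
    rw [show ((n:ℤ) + 1 + 3 : ℤ) = N + 4 by rw [hN]; ring, show ((n:ℤ) + 1 + 2 : ℤ) = N + 3 by rw [hN]; ring,
      show ((n:ℤ) + 1 + 1 : ℤ) = N + 2 by rw [hN]; ring] at hL1
    rw [show ((n:ℤ) + 2 + 3 : ℤ) = N + 5 by rw [hN]; ring, show ((n:ℤ) + 2 + 2 : ℤ) = N + 4 by rw [hN]; ring,
      show ((n:ℤ) + 2 + 1 : ℤ) = N + 3 by rw [hN]; ring] at hL2
    have hs := hsrec (N + 2) (by omega)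
    rw [show (N + 2 - 1 : ℤ) = N + 1 by ring, show (N + 2 - 2 : ℤ) = N by ring] at hs
    rw [show (N + 2 + 3 : ℤ) = N + 5 by ring, show (N + 2 + 2 : ℤ) = N + 4 by ring,
      show (N + 1 + 3 : ℤ) = N + 4 by ring, show (N + 1 + 2 : ℤ) = N + 3 by ring] at *
    linear_combination x 1 * hL2 + s 1 * IH2 - IH1 - hs - x 2 * hL1
end

section
/- For all n ≥ 0, the identity x_2 s_n = x_{n+2} + x_1 s_{n-1} holds (with the convention s_{-1} = 0). -/
theorem x2_sn_identity (x : ℤ → K) (hx1 : x 1 = X1) (hx2 : x 2 = X2)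
    (hxnz : ∀ m : ℤ, x m ≠ 0)
    (hrec : ∀ m : ℤ, x (m - 1) * x (m + 1) = x m ^ 2 + 1)
    (s : ℤ → K) (hsm1 : s (-1) = 0) (hs0 : s 0 = 1)
    (hs1 : s 1 = x 0 * x 3 - x 1 * x 2)
    (hsrec : ∀ n : ℤ, 2 ≤ n → s n = s 1 * s (n - 1) - s (n - 2)) :
    ∀ n : ℕ, x 2 * s (n : ℤ) = x ((n : ℤ) + 2) + x 1 * s ((n : ℤ) - 1) := by
  -- linear recurrence for x with coefficient s 1
  have hlin : ∀ m : ℕ, s 1 * x ((m : ℤ) + 1) = x ((m : ℤ) + 2) + x (m : ℤ) := by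
    intro m
    induction m with
    | zero =>
      norm_num
      have h1 := hrec 1
      have h2 := hrec 2
      norm_num at h1 h2
      apply mul_right_cancel₀ (hxnz 1)
      linear_combination x 1 ^ 2 * hs1 + x 0 * x 1 * h2 + x 1 * x 2 * h1
    | succ k ih =>
      push_cast
      rw [show (k : ℤ) + 1 + 1 = (k : ℤ) + 2 from by ring,
          show (k : ℤ) + 1 + 2 = (k : ℤ) + 3 from by ring]
      have hr1 := hrec ((k : ℤ) + 1)
      rw [show (k : ℤ) + 1 - 1 = (k : ℤ) from by ring,
          show (k : ℤ) + 1 + 1 = (k : ℤ) + 2 from by ring] at hr1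
      have hr2 := hrec ((k : ℤ) + 2)
      rw [show (k : ℤ) + 2 - 1 = (k : ℤ) + 1 from by ring,
          show (k : ℤ) + 2 + 1 = (k : ℤ) + 3 from by ring] at hr2
      apply mul_right_cancel₀ (hxnz ((k : ℤ) + 1))
      linear_combination x ((k : ℤ) + 2) * ih - hr2 + hr1
  -- s recurrence valid from n = 1
  have hsrec' : ∀ n : ℤ, 1 ≤ n → s n = s 1 * s (n - 1) - s (n - 2) := by
    intro n hn
    rcases eq_or_lt_of_le hn with h | h
    · rw [← h]
      norm_num [hs0, hsm1]
    · exact hsrec n (by omega)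
  suffices H : ∀ n : ℕ, (x 2 * s (n : ℤ) = x ((n : ℤ) + 2) + x 1 * s ((n : ℤ) - 1)) ∧
      (x 2 * s ((n : ℤ) + 1) = x ((n : ℤ) + 3) + x 1 * s (n : ℤ)) by
    exact fun n => (H n).1
  intro n
  induction n with
  | zero =>
    constructor
    · norm_num [hs0, hsm1]
    · norm_num [hs0]
      have hl := hlin 1
      norm_num at hl
      linear_combination hl
  | succ k ih =>
    obtain ⟨ih1, ih2⟩ := ih
    constructor
    · push_cast
      rw [show (k : ℤ) + 1 + 2 = (k : ℤ) + 3 from by ring,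
          show (k : ℤ) + 1 - 1 = (k : ℤ) from by ring]
      exact ih2
    · push_cast
      rw [show (k : ℤ) + 1 + 1 = (k : ℤ) + 2 from by ring,
          show (k : ℤ) + 1 + 3 = (k : ℤ) + 4 from by ring]
      have h2' := hsrec' ((k : ℤ) + 2) (by omega)
      rw [show (k : ℤ) + 2 - 1 = (k : ℤ) + 1 from by ring,
          show (k : ℤ) + 2 - 2 = (k : ℤ) from by ring] at h2'
      have h1' := hsrec' ((k : ℤ) + 1) (by omega)
      rw [show (k : ℤ) + 1 - 1 = (k : ℤ) from by ring,
          show (k : ℤ) + 1 - 2 = (k : ℤ) - 1 from by ring] at h1'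
      have hl := hlin (k + 2)
      push_cast at hl
      rw [show (k : ℤ) + 2 + 1 = (k : ℤ) + 3 from by ring,
          show (k : ℤ) + 2 + 2 = (k : ℤ) + 4 from by ring] at hl
      linear_combination x 2 * h2' + s 1 * ih2 - ih1 + hl - x 1 * h1'
end

section
/- Define f_N = x_1^{-⌊(N+1)/2⌋} x_2^{-⌊N/2⌋} F(w_1,...,w_N) with the substitution w_k = x_{[k+1]}^2, where [k] ∈ {1,2} is congruent to k mod 2. Then for N ≥ 2, the identity x_{[N]} f_N = f_{N-1} + x_{[N-1]} f_{N-2} holds. -/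
/-- Fibonacci polynomial: sum over totally disconnected subsets of {1,...,N}. -/
def fibPoly {R : Type*} [CommRing R] (w : ℕ → R) (N : ℕ) : R :=
  ∑ D ∈ (Finset.Icc 1 N).powerset.filter (fun D => ∀ k ∈ D, k + 1 ∉ D), ∏ k ∈ D, w k


noncomputable def fN (N : ℕ) : K :=
  X1⁻¹ ^ ((N + 1) / 2) * X2⁻¹ ^ (N / 2) *
    fibPoly (fun k => (if k % 2 = 1 then X2 else X1) ^ 2) N


/-! Splitting the sets counted by `F_N` according to whether they contain `N` gives the
Fibonacci-type recursion `F_N = F_{N-1} + w_N F_{N-2}`. The prefactor of `f_N` is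
`(x_{[1]} x_{[2]} ⋯ x_{[N]})⁻¹` and `w_N = x_{[N-1]}²`, so dividing by it turns that recursion into
the stated one. -/

open Finset

def sparseSubsets (N : ℕ) : Finset (Finset ℕ) :=
  (Icc 1 N).powerset.filter (fun D => ∀ k ∈ D, k + 1 ∉ D)

lemma fibPoly_eq_sum_sparseSubsets {R : Type*} [CommRing R] (w : ℕ → R) (N : ℕ) :
    fibPoly w N = ∑ D ∈ sparseSubsets N, ∏ k ∈ D, w k :=
  rfl

lemma mem_sparseSubsets {N : ℕ} {D : Finset ℕ} :
    D ∈ sparseSubsets N ↔ (∀ k ∈ D, 1 ≤ k ∧ k ≤ N) ∧ ∀ k ∈ D, k + 1 ∉ D := by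
  simp only [sparseSubsets, mem_filter, mem_powerset, subset_iff, mem_Icc]

lemma notMem_of_mem_sparseSubsets {N k : ℕ} {D : Finset ℕ} (hD : D ∈ sparseSubsets N)
    (hk : N < k) : k ∉ D := fun hmem => by
  have := (mem_sparseSubsets.mp hD).1 k hmem
  omega

lemma sparseSubsets_filter_notMem (n : ℕ) :
    (sparseSubsets (n + 2)).filter (fun D => n + 2 ∉ D) = sparseSubsets (n + 1) := by
  ext D
  simp only [mem_filter, mem_sparseSubsets]
  constructor
  · rintro ⟨⟨hbound, hsparse⟩, hlast⟩
    refine ⟨fun k hk => ?_, hsparse⟩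
    have := hbound k hk
    have : k ≠ n + 2 := fun h => hlast (h ▸ hk)
    omega
  · rintro ⟨hbound, hsparse⟩
    refine ⟨⟨fun k hk => ?_, hsparse⟩, fun hlast => ?_⟩
    · have := hbound k hk; omega
    · have := hbound _ hlast; omega

lemma sparseSubsets_filter_mem (n : ℕ) :
    (sparseSubsets (n + 2)).filter (fun D => n + 2 ∈ D) =
      (sparseSubsets n).image (insert (n + 2)) := by
  ext D
  simp only [mem_filter, mem_image, mem_sparseSubsets]
  constructor
  · rintro ⟨⟨hbound, hsparse⟩, hlast⟩
    refine ⟨D.erase (n + 2), ⟨fun k hk => ?_, fun k hk hk' => ?_⟩, insert_erase hlast⟩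
    · rw [mem_erase] at hk
      have := hbound k hk.2
      have : k ≠ n + 1 := by rintro rfl; exact hsparse _ hk.2 hlast
      omega
    · exact hsparse k (mem_of_mem_erase hk) (mem_of_mem_erase hk')
  · rintro ⟨D, ⟨hbound, hsparse⟩, rfl⟩
    refine ⟨⟨fun k hk => ?_, fun k hk hk' => ?_⟩, mem_insert_self _ _⟩
    · rcases mem_insert.mp hk with rfl | hk
      · omega
      · have := hbound k hk; omega
    · rcases mem_insert.mp hk with rfl | hk <;> rcases mem_insert.mp hk' with h | hk'
      · omega
      · have := hbound _ hk'; omega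
      · have := hbound k hk; omega
      · exact hsparse k hk hk'

lemma insert_injOn_sparseSubsets (n : ℕ) :
    Set.InjOn (insert (n + 2)) (sparseSubsets n : Set (Finset ℕ)) := by
  intro D hD E hE h
  rw [← erase_insert (notMem_of_mem_sparseSubsets hD (by omega : n < n + 2)),
    ← erase_insert (notMem_of_mem_sparseSubsets hE (by omega : n < n + 2)), h]

theorem fibPoly_add_two {R : Type*} [CommRing R] (w : ℕ → R) (n : ℕ) :
    fibPoly w (n + 2) = fibPoly w (n + 1) + w (n + 2) * fibPoly w n := by
  simp only [fibPoly_eq_sum_sparseSubsets]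
  rw [← sum_filter_not_add_sum_filter _ (fun D => n + 2 ∈ D), sparseSubsets_filter_notMem,
    sparseSubsets_filter_mem, sum_image (insert_injOn_sparseSubsets n), mul_sum]
  congr 1
  exact sum_congr rfl fun D hD => prod_insert (notMem_of_mem_sparseSubsets hD (by omega))

lemma prod_range_alternating {M : Type*} [CommMonoid M] (a b : M) (N : ℕ) :
    ∏ k ∈ range N, (if (k + 1) % 2 = 1 then a else b) = a ^ ((N + 1) / 2) * b ^ (N / 2) := by
  induction N with
  | zero => simp
  | succ N ih =>
    rw [prod_range_succ, ih]
    rcases Nat.even_or_odd' N with ⟨m, rfl | rfl⟩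
    · simp only [show (2 * m + 1) % 2 = 1 by omega, show (2 * m + 1) / 2 = m by omega,
        show (2 * m + 1 + 1) / 2 = m + 1 by omega, show 2 * m / 2 = m by omega, if_true]
      rw [pow_succ, mul_right_comm]
    · simp only [show (2 * m + 1 + 1) % 2 = 0 by omega, show (2 * m + 1 + 1) / 2 = m + 1 by omega,
        show (2 * m + 1 + 1 + 1) / 2 = m + 1 by omega, show (2 * m + 1) / 2 = m by omega,
        zero_ne_one, if_false]
      rw [pow_succ b, mul_assoc]

def scaledFibPoly {F : Type*} [Field F] (x w : ℕ → F) (N : ℕ) : F :=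
  (∏ k ∈ range N, x (k + 1))⁻¹ * fibPoly w N

theorem scaledFibPoly_add_two {F : Type*} [Field F] {x w : ℕ → F} (hx : ∀ k, x k ≠ 0) {n : ℕ}
    (hw : w (n + 2) = x (n + 1) ^ 2) :
    x (n + 2) * scaledFibPoly x w (n + 2) =
      scaledFibPoly x w (n + 1) + x (n + 1) * scaledFibPoly x w n := by
  have hprod : ∀ N, ∏ k ∈ range N, x (k + 1) ≠ 0 := fun N => prod_ne_zero_iff.mpr fun k _ => hx _
  simp only [scaledFibPoly, fibPoly_add_two, hw, prod_range_succ]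
  field_simp [hprod, hx]

-- `x_{[k]}` in the paper's notation
noncomputable def bracketVar (k : ℕ) : K := if k % 2 = 1 then X1 else X2

lemma bracketVar_ne_zero (k : ℕ) : bracketVar k ≠ 0 := by
  have hinj := IsFractionRing.injective (MvPolynomial (Fin 2) ℚ) K
  unfold bracketVar X1 X2
  split_ifs <;> exact (map_ne_zero_iff _ hinj).mpr (MvPolynomial.X_ne_zero _)

lemma fN_eq_scaledFibPoly (N : ℕ) :
    fN N = scaledFibPoly bracketVar (fun k => (if k % 2 = 1 then X2 else X1) ^ 2) N := by
  simp only [fN, scaledFibPoly, bracketVar, prod_range_alternating, mul_inv, inv_pow]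

theorem fN_recursion (N : ℕ) (hN : 2 ≤ N) :
    (if N % 2 = 1 then X1 else X2) * fN N =
      fN (N - 1) + (if (N - 1) % 2 = 1 then X1 else X2) * fN (N - 2) := by
  obtain ⟨n, rfl⟩ : ∃ n, N = n + 2 := ⟨N - 2, by omega⟩
  show bracketVar (n + 2) * fN (n + 2) = fN (n + 1) + bracketVar (n + 1) * fN n
  simp only [fN_eq_scaledFibPoly]
  refine scaledFibPoly_add_two bracketVar_ne_zero ?_
  rcases Nat.mod_two_eq_zero_or_one n with h | h <;> simp [bracketVar, h, Nat.add_mod]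
end

section
/- For every n ≥ 0, s_n = f_{2n} and x_{n+3} = f_{2n+1}. In particular all x_m and s_n are Laurent polynomials in x_1, x_2 with positive integer coefficients. -/
namespace XsAux

lemma fibPoly_zero {R : Type*} [CommRing R] (w : ℕ → R) : fibPoly w 0 = 1 := by
  rw [fibPoly, show Finset.Icc 1 0 = (∅ : Finset ℕ) by decide, Finset.powerset_empty,
    Finset.filter_singleton]
  simp

lemma fibPoly_one {R : Type*} [CommRing R] (w : ℕ → R) : fibPoly w 1 = 1 + w 1 := by
  rw [fibPoly, show Finset.Icc 1 1 = ({1} : Finset ℕ) by decide,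
    show ({1} : Finset ℕ).powerset = {∅, {1}} by decide]
  rw [Finset.filter_insert, Finset.filter_singleton]
  simp [Finset.sum_pair (by decide : (∅ : Finset ℕ) ≠ {1})]

lemma fibPoly_add_two {R : Type*} [CommRing R] (w : ℕ → R) (N : ℕ) :
    fibPoly w (N + 2) = fibPoly w (N + 1) + w (N + 2) * fibPoly w N := by
  rw [fibPoly, ← Finset.sum_filter_add_sum_filter_not
    ((Finset.Icc 1 (N+2)).powerset.filter (fun D => ∀ k ∈ D, k + 1 ∉ D)) (fun D => N + 2 ∈ D)]
  rw [add_comm]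
  congr 1
  · rw [fibPoly]
    congr 1
    ext D
    simp only [Finset.mem_filter, Finset.mem_powerset, Finset.subset_iff, Finset.mem_Icc]
    constructor
    · rintro ⟨⟨hsub, hP⟩, hnot⟩
      refine ⟨fun k hk => ?_, hP⟩
      have := hsub hk
      have : k ≠ N + 2 := fun h => hnot (h ▸ hk)
      omega
    · rintro ⟨hsub, hP⟩
      refine ⟨⟨fun k hk => by have := hsub hk; omega, hP⟩, fun h => by have := hsub h; omega⟩
  · rw [fibPoly, Finset.mul_sum]
    refine Finset.sum_bij' (fun D _ => D.erase (N+2)) (fun D _ => insert (N+2) D) ?_ ?_ ?_ ?_ ?_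
    · intro D hD
      simp only [Finset.mem_filter, Finset.mem_powerset, Finset.subset_iff, Finset.mem_Icc] at hD ⊢
      obtain ⟨⟨hsub, hP⟩, hmem⟩ := hD
      constructor
      · intro k hk
        rw [Finset.mem_erase] at hk
        have h1 := hsub hk.2
        have h2 : k ≠ N + 1 := by
          intro h
          exact hP k hk.2 (by rw [h]; exact hmem)
        omega
      · intro k hk
        exact fun h => hP k (Finset.mem_of_mem_erase hk) (Finset.mem_of_mem_erase h)
    · intro D hD
      simp only [Finset.mem_filter, Finset.mem_powerset, Finset.subset_iff, Finset.mem_Icc,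
        Finset.mem_insert] at hD ⊢
      obtain ⟨hsub, hP⟩ := hD
      refine ⟨⟨fun k hk => ?_, fun k hk hk1 => ?_⟩, Or.inl trivial⟩
      · rcases hk with rfl | hk
        · omega
        · have := hsub hk; omega
      · rcases hk with rfl | hk
        · rcases hk1 with h | h
          · omega
          · have := hsub h; omega
        · rcases hk1 with h | h
          · have := hsub hk; omega
          · exact hP k hk h
    · intro D hD
      simp only [Finset.mem_filter] at hD
      exact Finset.insert_erase hD.2
    · intro D hD
      simp only [Finset.mem_filter, Finset.mem_powerset, Finset.subset_iff, Finset.mem_Icc] at hD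
      refine Finset.erase_insert (fun h => ?_)
      have := hD.1 h; omega
    · intro D hD
      simp only [Finset.mem_filter] at hD
      exact (Finset.mul_prod_erase D w hD.2).symm

variable {R : Type*} [CommRing R]

/-- `gg A B n` is the Fibonacci polynomial with alternating weights `A^2, B^2`. -/
noncomputable def gg (A B : R) (n : ℕ) : R :=
  fibPoly (fun k => (if k % 2 = 1 then B else A) ^ 2) n

lemma gg_add_two (A B : R) (n : ℕ) :
    gg A B (n + 2) = gg A B (n + 1) + (if (n + 2) % 2 = 1 then B else A) ^ 2 * gg A B n :=
  fibPoly_add_two _ n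

lemma gg_even_step (A B : R) (n : ℕ) :
    gg A B (2 * n + 2) = gg A B (2 * n + 1) + A ^ 2 * gg A B (2 * n) := by
  have h := gg_add_two A B (2 * n)
  rwa [if_neg (by omega)] at h

lemma gg_odd_step (A B : R) (n : ℕ) :
    gg A B (2 * n + 3) = gg A B (2 * n + 2) + B ^ 2 * gg A B (2 * n + 1) := by
  have h := gg_add_two A B (2 * n + 1)
  rwa [if_pos (by omega)] at h

lemma gg0 (A B : R) : gg A B 0 = 1 := fibPoly_zero _
lemma gg1 (A B : R) : gg A B 1 = 1 + B ^ 2 := by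
  rw [gg, fibPoly_one]; norm_num

lemma gg2 (A B : R) : gg A B 2 = 1 + A ^ 2 + B ^ 2 := by
  have h := gg_even_step A B 0
  norm_num [gg0, gg1] at h
  linear_combination h

lemma gg3 (A B : R) : gg A B 3 = 1 + A ^ 2 + 2 * B ^ 2 + B ^ 4 := by
  have h := gg_odd_step A B 0
  norm_num [gg1, gg2] at h
  linear_combination h

lemma gg5 (A B : R) : gg A B 5 =
    1 + 2 * A ^ 2 + A ^ 4 + 3 * B ^ 2 + 2 * A ^ 2 * B ^ 2 + 3 * B ^ 4 + B ^ 2 * B ^ 4 := by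
  have h4 := gg_even_step A B 1
  have h5 := gg_odd_step A B 1
  norm_num [gg2, gg3] at h4 h5
  linear_combination h5 + h4

lemma gg_even_rec (A B : R) (n : ℕ) :
    gg A B (2 * n + 4) = (1 + A ^ 2 + B ^ 2) * gg A B (2 * n + 2) - A ^ 2 * B ^ 2 * gg A B (2 * n) := by
  have h1 := gg_even_step A B (n + 1)
  have h2 := gg_odd_step A B n
  have h3 := gg_even_step A B n
  simp only [show 2 * (n + 1) + 2 = 2 * n + 4 from by ring, show 2 * (n + 1) + 1 = 2 * n + 3 from by ring,
    show 2 * (n + 1) = 2 * n + 2 from by ring] at h1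
  linear_combination h1 + h2 - B ^ 2 * h3

lemma gg_odd_rec (A B : R) (n : ℕ) :
    gg A B (2 * n + 5) = (1 + A ^ 2 + B ^ 2) * gg A B (2 * n + 3) - A ^ 2 * B ^ 2 * gg A B (2 * n + 1) := by
  have h1 := gg_odd_step A B (n + 1)
  have h2 := gg_even_step A B (n + 1)
  have h3 := gg_odd_step A B n
  simp only [show 2 * (n + 1) + 3 = 2 * n + 5 from by ring, show 2 * (n + 1) + 2 = 2 * n + 4 from by ring,
    show 2 * (n + 1) + 1 = 2 * n + 3 from by ring,
    show 2 * (n + 1) = 2 * n + 2 from by ring] at h1 h2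
  linear_combination h1 + h2 - A ^ 2 * h3

lemma gg_det (A B : R) : ∀ n : ℕ, gg A B (2 * n + 5) * gg A B (2 * n + 1) =
    gg A B (2 * n + 3) ^ 2 + A ^ (2 * n + 4) * B ^ (2 * n + 2) := by
  intro n
  induction n with
  | zero =>
    norm_num [gg1, gg3, gg5]
    ring
  | succ n ih =>
    have r1 := gg_odd_rec A B (n + 1)
    have r2 := gg_odd_rec A B n
    simp only [show 2 * (n + 1) + 5 = 2 * n + 7 from by ring,
      show 2 * (n + 1) + 3 = 2 * n + 5 from by ring,
      show 2 * (n + 1) + 1 = 2 * n + 3 from by ring,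
      show 2 * (n + 1) + 4 = 2 * n + 6 from by ring,
      show 2 * (n + 1) + 2 = 2 * n + 4 from by ring] at r1 ⊢
    linear_combination gg A B (2 * n + 3) * r1 - gg A B (2 * n + 5) * r2 + A ^ 2 * B ^ 2 * ih

variable {F : Type*} [Field F]

lemma x_odd (A B : F) (hA : A ≠ 0) (hB : B ≠ 0) (x : ℤ → F)
    (hx1 : x 1 = A) (hx2 : x 2 = B) (hxnz : ∀ m : ℤ, x m ≠ 0)
    (hrec : ∀ m : ℤ, x (m - 1) * x (m + 1) = x m ^ 2 + 1) :
    ∀ n : ℕ, A ^ (n + 1) * B ^ n * x ((n : ℤ) + 3) = gg A B (2 * n + 1) := by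
  have key : ∀ n : ℕ, A ^ (n + 1) * B ^ n * x ((n : ℤ) + 3) = gg A B (2 * n + 1) ∧
      A ^ (n + 2) * B ^ (n + 1) * x ((n : ℤ) + 4) = gg A B (2 * n + 3) := by
    intro n
    induction n with
    | zero =>
      have h2 := hrec 2
      have h3 := hrec 3
      norm_num at h2 h3
      rw [hx1, hx2] at h2; rw [hx2] at h3
      constructor
      · norm_num [gg1]
        linear_combination h2
      · norm_num [gg3]
        linear_combination A ^ 2 * h3 + (A * x 3 + B ^ 2 + 1) * h2
    | succ n ih =>
      obtain ⟨e1, e2⟩ := ih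
      have hr := hrec ((n : ℤ) + 4)
      rw [show (n : ℤ) + 4 - 1 = (n : ℤ) + 3 from by ring,
        show (n : ℤ) + 4 + 1 = (n : ℤ) + 5 from by ring] at hr
      have gnz : gg A B (2 * n + 1) ≠ 0 := by
        rw [← e1]
        exact mul_ne_zero (mul_ne_zero (pow_ne_zero _ hA) (pow_ne_zero _ hB)) (hxnz _)
      have det := gg_det A B n
      constructor
      · rw [show ((n + 1 : ℕ) : ℤ) + 3 = (n : ℤ) + 4 from by push_cast; ring,
          show 2 * (n + 1) + 1 = 2 * n + 3 from by ring,
          show n + 1 + 1 = n + 2 from rfl]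
        exact e2
      · rw [show ((n + 1 : ℕ) : ℤ) + 4 = (n : ℤ) + 5 from by push_cast; ring,
          show 2 * (n + 1) + 3 = 2 * n + 5 from by ring]
        apply mul_left_cancel₀ gnz
        linear_combination (-(A ^ (n + 1 + 2) * B ^ (n + 1 + 1) * x ((n : ℤ) + 5))) * e1 +
          A ^ (2 * n + 4) * B ^ (2 * n + 2) * hr +
          (A ^ (n + 2) * B ^ (n + 1) * x ((n : ℤ) + 4) + gg A B (2 * n + 3)) * e2 - det
  exact fun n => (key n).1

lemma s_even (A B : F) (hA : A ≠ 0) (hB : B ≠ 0) (x : ℤ → F)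
    (hx1 : x 1 = A) (hx2 : x 2 = B) (hxnz : ∀ m : ℤ, x m ≠ 0)
    (hrec : ∀ m : ℤ, x (m - 1) * x (m + 1) = x m ^ 2 + 1)
    (s : ℤ → F) (hs0 : s 0 = 1) (hs1 : s 1 = x 0 * x 3 - x 1 * x 2)
    (hsrec : ∀ n : ℤ, 2 ≤ n → s n = s 1 * s (n - 1) - s (n - 2)) :
    ∀ n : ℕ, A ^ n * B ^ n * s (n : ℤ) = gg A B (2 * n) := by
  have h1 := hrec 1
  have h2 := hrec 2
  norm_num at h1 h2
  rw [hx1, hx2] at h1 h2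
  have es1 : A * B * s 1 = gg A B 2 := by
    rw [hs1, hx1, hx2, gg2]
    linear_combination (A * x 3) * h1 + (A ^ 2 + 1) * h2
  have key : ∀ n : ℕ, (A ^ n * B ^ n * s (n : ℤ) = gg A B (2 * n)) ∧
      (A ^ (n + 1) * B ^ (n + 1) * s ((n : ℤ) + 1) = gg A B (2 * n + 2)) := by
    intro n
    induction n with
    | zero =>
      refine ⟨by norm_num [hs0, gg0], ?_⟩
      norm_num
      exact es1
    | succ n ih =>
      obtain ⟨e1, e2⟩ := ih
      have hs := hsrec ((n : ℤ) + 2) (by omega)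
      rw [show (n : ℤ) + 2 - 1 = (n : ℤ) + 1 from by ring,
        show (n : ℤ) + 2 - 2 = (n : ℤ) from by ring] at hs
      have grec := gg_even_rec A B n
      constructor
      · rw [show ((n + 1 : ℕ) : ℤ) = (n : ℤ) + 1 from by push_cast; ring,
          show 2 * (n + 1) = 2 * n + 2 from by ring]
        exact e2
      · rw [show ((n + 1 : ℕ) : ℤ) + 1 = (n : ℤ) + 2 from by push_cast; ring,
          show 2 * (n + 1) + 2 = 2 * n + 4 from by ring, gg2] at *
        rw [hs]
        linear_combination (A ^ (n + 1) * B ^ (n + 1) * s ((n : ℤ) + 1)) * es1 +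
          (1 + A ^ 2 + B ^ 2) * e2 - A ^ 2 * B ^ 2 * e1 - grec
  exact fun n => (key n).1

/-- A `ℕ`-coefficient version of `gg`, defined by recursion. -/
noncomputable def ggN {S : Type*} [CommSemiring S] (A B : S) : ℕ → S
  | 0 => 1
  | 1 => 1 + B ^ 2
  | (n + 2) => ggN A B (n + 1) + (if (n + 2) % 2 = 1 then B else A) ^ 2 * ggN A B n

lemma ggN_map {S : Type*} [CommSemiring S] (φ : S →+* R) (A B : S) :
    ∀ n : ℕ, φ (ggN A B n) = gg (φ A) (φ B) n := by
  have key : ∀ n : ℕ, φ (ggN A B n) = gg (φ A) (φ B) n ∧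
      φ (ggN A B (n + 1)) = gg (φ A) (φ B) (n + 1) := by
    intro n
    induction n with
    | zero =>
      refine ⟨by simp [ggN, gg0], ?_⟩
      rw [show (0 + 1 : ℕ) = 1 from rfl, gg1]
      simp [ggN]
    | succ n ih =>
      refine ⟨ih.2, ?_⟩
      rw [show n + 1 + 1 = n + 2 from rfl, gg_add_two,
        show ggN A B (n + 2) = ggN A B (n + 1) + (if (n + 2) % 2 = 1 then B else A) ^ 2 * ggN A B n
          from by rw [ggN]]
      rw [map_add, map_mul, map_pow, ih.1, ih.2, apply_ite φ]
  exact fun n => (key n).1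

lemma X1_ne : X1 ≠ 0 := by
  rw [X1, Ne, IsFractionRing.to_map_eq_zero_iff]
  exact MvPolynomial.X_ne_zero 0

lemma X2_ne : X2 ≠ 0 := by
  rw [X2, Ne, IsFractionRing.to_map_eq_zero_iff]
  exact MvPolynomial.X_ne_zero 1

/-- The canonical map `ℕ[x₁,x₂] → K`. -/
noncomputable def φK : MvPolynomial (Fin 2) ℕ →+* K :=
  (algebraMap (MvPolynomial (Fin 2) ℚ) K).comp (MvPolynomial.map (Nat.castRingHom ℚ))

lemma φK_apply (p : MvPolynomial (Fin 2) ℕ) :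
    φK p = algebraMap (MvPolynomial (Fin 2) ℚ) K (p.map (Nat.castRingHom ℚ)) := rfl

lemma φK_X0 : φK (MvPolynomial.X 0) = X1 := by
  rw [φK, RingHom.comp_apply, MvPolynomial.map_X, X1]

lemma φK_X1 : φK (MvPolynomial.X 1) = X2 := by
  rw [φK, RingHom.comp_apply, MvPolynomial.map_X, X2]

lemma fN_eq (N : ℕ) : fN N = X1⁻¹ ^ ((N + 1) / 2) * X2⁻¹ ^ (N / 2) * gg X1 X2 N := rfl

end XsAux

open XsAux in
theorem xs_thru_f (x : ℤ → K) (hx1 : x 1 = X1) (hx2 : x 2 = X2)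
    (hxnz : ∀ m : ℤ, x m ≠ 0)
    (hrec : ∀ m : ℤ, x (m - 1) * x (m + 1) = x m ^ 2 + 1)
    (s : ℤ → K) (hsm1 : s (-1) = 0) (hs0 : s 0 = 1)
    (hs1 : s 1 = x 0 * x 3 - x 1 * x 2)
    (hsrec : ∀ n : ℤ, 2 ≤ n → s n = s 1 * s (n - 1) - s (n - 2)) :
    (∀ n : ℕ, s (n : ℤ) = fN (2 * n) ∧ x ((n : ℤ) + 3) = fN (2 * n + 1)) ∧
    (∀ m : ℤ, ∃ (p : MvPolynomial (Fin 2) ℕ) (a b : ℕ),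
      X1 ^ a * X2 ^ b * x m =
        algebraMap (MvPolynomial (Fin 2) ℚ) K (p.map (Nat.castRingHom ℚ))) ∧
    (∀ n : ℕ, ∃ (p : MvPolynomial (Fin 2) ℕ) (a b : ℕ),
      X1 ^ a * X2 ^ b * s (n : ℤ) =
        algebraMap (MvPolynomial (Fin 2) ℚ) K (p.map (Nat.castRingHom ℚ))) := by
  have hxo := x_odd X1 X2 X1_ne X2_ne x hx1 hx2 hxnz hrec
  have hse := s_even X1 X2 X1_ne X2_ne x hx1 hx2 hxnz hrec s hs0 hs1 hsrec
  -- the mirrored sequence, for negative indices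
  set y : ℤ → K := fun k => x (3 - k) with hy
  have hy1 : y 1 = X2 := by show x (3 - 1) = X2; norm_num [hx2]
  have hy2 : y 2 = X1 := by show x (3 - 2) = X1; norm_num [hx1]
  have hynz : ∀ m : ℤ, y m ≠ 0 := fun m => hxnz _
  have hyrec : ∀ m : ℤ, y (m - 1) * y (m + 1) = y m ^ 2 + 1 := by
    intro m
    show x (3 - (m - 1)) * x (3 - (m + 1)) = x (3 - m) ^ 2 + 1
    rw [show 3 - (m - 1) = (3 - m) + 1 from by ring, show 3 - (m + 1) = (3 - m) - 1 from by ring,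
      mul_comm]
    exact hrec (3 - m)
  have hyo := x_odd X2 X1 X2_ne X1_ne y hy1 hy2 hynz hyrec
  refine ⟨?_, ?_, ?_⟩
  · intro n
    constructor
    · have h := hse n
      rw [fN_eq, show (2 * n + 1) / 2 = n from by omega, show 2 * n / 2 = n from by omega,
        inv_pow, inv_pow, ← h]
      field_simp [X1_ne, X2_ne]
    · have h := hxo n
      rw [fN_eq, show (2 * n + 1 + 1) / 2 = n + 1 from by omega,
        show (2 * n + 1) / 2 = n from by omega, inv_pow, inv_pow, ← h]
      field_simp [X1_ne, X2_ne]
  · intro m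
    rcases lt_or_ge m 1 with hm | hm
    · -- m ≤ 0 : use the mirrored sequence
      set n : ℕ := (-m).toNat with hn
      have hnm : (n : ℤ) = -m := Int.toNat_of_nonneg (by omega)
      refine ⟨ggN (MvPolynomial.X 1) (MvPolynomial.X 0) (2 * n + 1), n, n + 1, ?_⟩
      have h := hyo n
      rw [show y ((n : ℤ) + 3) = x m from by show x (3 - ((n : ℤ) + 3)) = x m; congr 1; omega] at h
      rw [← φK_apply, ggN_map φK, φK_X0, φK_X1]
      linear_combination h
    · rcases lt_or_ge m 3 with hm3 | hm3
      · interval_cases m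
        · exact ⟨MvPolynomial.X 0, 0, 0, by
            rw [← φK_apply, φK_X0]; norm_num [hx1]⟩
        · exact ⟨MvPolynomial.X 1, 0, 0, by
            rw [← φK_apply, φK_X1]; norm_num [hx2]⟩
      · set n : ℕ := (m - 3).toNat with hn
        have hnm : (n : ℤ) = m - 3 := Int.toNat_of_nonneg (by omega)
        refine ⟨ggN (MvPolynomial.X 0) (MvPolynomial.X 1) (2 * n + 1), n + 1, n, ?_⟩
        have h := hxo n
        rw [show (n : ℤ) + 3 = m from by omega] at h
        rw [← φK_apply, ggN_map φK, φK_X0, φK_X1]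
        exact h
  · intro n
    refine ⟨ggN (MvPolynomial.X 0) (MvPolynomial.X 1) (2 * n), n, n, ?_⟩
    rw [← φK_apply, ggN_map φK, φK_X0, φK_X1]
    exact hse n
end

section
/- For every n ≥ 0, x_{n+3} = x_1^{-n-1} x_2^{-n} ( x_2^{2(n+1)} + Σ_{q+r ≤ n} C(n-r, q) C(n+1-q, r) x_1^{2q} x_2^{2r} ), where C denotes the binomial coefficient. -/
/-!
Subtracting two consecutive exchange relations shows that `(x (m+1) + x (m-1)) / x m` does not
depend on `m`. Hence `x (n+3) * X1 ^ (n+1) * X2 ^ n` satisfies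
`P (n+2) = (1 + a + b) P (n+1) - a b P n` with `a = X1 ^ 2`, `b = X2 ^ 2`. The polynomial
`∑ c(n,q,r) a^q b^r` with `c(n,q,r) = C(n-r,q) C(n+1-q,r)` satisfies the same recurrence, because
these coefficients obey a two-dimensional Pascal rule (Pascal's rule in each factor), and both
sequences start with `1 + b` and `1 + a + 2b + b^2`.
-/

open Finset

def kroneckerCoeff (n q r : ℕ) : ℕ := (n - r).choose q * (n + 1 - q).choose r

theorem kroneckerCoeff_eq_zero_iff {n q r : ℕ} :
    kroneckerCoeff n q r = 0 ↔ n - r < q ∨ n + 1 - q < r := by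
  simp [kroneckerCoeff, Nat.choose_eq_zero_iff]

theorem kroneckerCoeff_eq_zero_of_le {n q r : ℕ} (h : n + 2 ≤ q + r) :
    kroneckerCoeff n q r = 0 :=
  kroneckerCoeff_eq_zero_iff.2 (by omega)

def shiftFst (f : ℕ → ℕ → ℕ) : ℕ → ℕ → ℕ
  | 0, _ => 0
  | q + 1, r => f q r

def shiftSnd (f : ℕ → ℕ → ℕ) : ℕ → ℕ → ℕ
  | _, 0 => 0
  | q, r + 1 => f q r

theorem kroneckerCoeff_succ_succ_add (n q r : ℕ) :
    kroneckerCoeff (n + 2) (q + 1) (r + 1) + kroneckerCoeff n q r =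
      kroneckerCoeff (n + 1) (q + 1) (r + 1) + kroneckerCoeff (n + 1) q (r + 1) +
        kroneckerCoeff (n + 1) (q + 1) r := by
  simp only [kroneckerCoeff]
  rcases Nat.lt_or_ge n r with hr | hr
  · rcases q with _ | q
    · simp (disch := omega) [Nat.choose_eq_zero_of_lt, Nat.choose_succ_succ' (n + 1) r]
    · simp (disch := omega) [Nat.choose_eq_zero_of_lt]
  rcases Nat.lt_or_ge (n + 1) q with hq | hq
  · simp (disch := omega) [Nat.choose_eq_zero_of_lt]
  rw [show n + 2 - (r + 1) = n - r + 1 by omega, show n + 2 + 1 - (q + 1) = n + 1 - q + 1 by omega,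
    show n + 1 - (r + 1) = n - r by omega, show n + 1 + 1 - (q + 1) = n + 1 - q by omega,
    show n + 1 + 1 - q = n + 1 - q + 1 by omega, show n + 1 - r = n - r + 1 by omega]
  simp only [Nat.choose_succ_succ']
  ring

theorem kroneckerCoeff_pascal (n : ℕ) :
    kroneckerCoeff (n + 2) + shiftFst (shiftSnd (kroneckerCoeff n)) =
      kroneckerCoeff (n + 1) + shiftFst (kroneckerCoeff (n + 1)) +
        shiftSnd (kroneckerCoeff (n + 1)) := by
  funext q r
  rcases q with _ | q <;> rcases r with _ | r
  · simp [kroneckerCoeff, shiftFst, shiftSnd]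
  · simp only [Pi.add_apply, shiftFst, shiftSnd, add_zero, kroneckerCoeff, Nat.choose_zero_right,
      one_mul, Nat.sub_zero]
    exact (Nat.choose_succ_succ' _ _).trans (add_comm _ _)
  · simp only [Pi.add_apply, shiftFst, shiftSnd, add_zero, kroneckerCoeff, Nat.choose_zero_right,
      mul_one, Nat.sub_zero]
    exact (Nat.choose_succ_succ' _ _).trans (add_comm _ _)
  · exact kroneckerCoeff_succ_succ_add n q r

section RectSum

variable {R : Type*} [CommSemiring R] (a b : R)

def rectSum (f : ℕ → ℕ → ℕ) (M N : ℕ) : R :=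
  ∑ q ∈ range M, ∑ r ∈ range N, f q r • (a ^ q * b ^ r)

theorem rectSum_add (f g : ℕ → ℕ → ℕ) (M N : ℕ) :
    rectSum a b (f + g) M N = rectSum a b f M N + rectSum a b g M N := by
  simp only [rectSum, Pi.add_apply, add_smul, sum_add_distrib]

theorem rectSum_shiftFst (f : ℕ → ℕ → ℕ) (M N : ℕ) :
    rectSum a b (shiftFst f) (M + 1) N = a * rectSum a b f M N := by
  simp only [rectSum, sum_range_succ', shiftFst, zero_smul, sum_const_zero, add_zero, mul_sum,
    mul_smul_comm, pow_succ]
  refine sum_congr rfl fun q _ => sum_congr rfl fun r _ => ?_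
  ring_nf

theorem rectSum_shiftSnd (f : ℕ → ℕ → ℕ) (M N : ℕ) :
    rectSum a b (shiftSnd f) M (N + 1) = b * rectSum a b f M N := by
  simp only [rectSum, sum_range_succ', shiftSnd, zero_smul, add_zero, mul_sum,
    mul_smul_comm, pow_succ]
  refine sum_congr rfl fun q _ => sum_congr rfl fun r _ => ?_
  ring_nf

theorem rectSum_eq_of_support {f : ℕ → ℕ → ℕ} {K M N : ℕ}
    (hf : ∀ q r, K ≤ q + r → f q r = 0) (hM : K ≤ M) (hN : K ≤ N) :
    rectSum a b f M N = rectSum a b f K K := by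
  simp only [rectSum, ← sum_product']
  refine (sum_subset (product_subset_product (range_subset_range.2 hM)
    (range_subset_range.2 hN)) fun p _ hp => ?_).symm
  simp only [mem_product, mem_range, not_and_or, not_lt] at hp
  rw [hf _ _ (by omega), zero_smul]

end RectSum

section KroneckerNum

variable {R : Type*} [CommSemiring R] (a b : R)

-- The term `b ^ (n+1)` of the formula is the entry `kroneckerCoeff n 0 (n+1) = 1`
-- (truncated subtraction makes `n - (n+1) = 0`).
def kroneckerNum (n : ℕ) : R := rectSum a b (kroneckerCoeff n) (n + 2) (n + 2)

theorem kroneckerNum_eq_rectSum {n M N : ℕ} (hM : n + 2 ≤ M) (hN : n + 2 ≤ N) :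
    kroneckerNum a b n = rectSum a b (kroneckerCoeff n) M N :=
  (rectSum_eq_of_support a b (fun _ _ => kroneckerCoeff_eq_zero_of_le) hM hN).symm

theorem kroneckerNum_add_two (n : ℕ) :
    kroneckerNum a b (n + 2) + a * b * kroneckerNum a b n =
      (1 + a + b) * kroneckerNum a b (n + 1) := by
  have hshift : a * b * kroneckerNum a b n =
      rectSum a b (shiftFst (shiftSnd (kroneckerCoeff n))) (n + 4) (n + 4) := by
    rw [rectSum_shiftFst, rectSum_shiftSnd, mul_assoc,
      kroneckerNum_eq_rectSum a b (M := n + 3) (N := n + 3) (by omega) (by omega)]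
  rw [hshift, kroneckerNum_eq_rectSum a b (M := n + 4) (N := n + 4) (by omega) (by omega),
    ← rectSum_add, kroneckerCoeff_pascal, rectSum_add, rectSum_add, rectSum_shiftFst,
    rectSum_shiftSnd,
    ← kroneckerNum_eq_rectSum a b (n := n + 1) (M := n + 4) (N := n + 4) (by omega) (by omega),
    ← kroneckerNum_eq_rectSum a b (n := n + 1) (M := n + 3) (N := n + 4) (by omega) (by omega),
    ← kroneckerNum_eq_rectSum a b (n := n + 1) (M := n + 4) (N := n + 3) (by omega) (by omega)]
  ring

theorem kroneckerNum_zero : kroneckerNum a b 0 = 1 + b := by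
  simp [kroneckerNum, rectSum, kroneckerCoeff, sum_range_succ]

theorem kroneckerNum_one : kroneckerNum a b 1 = 1 + a + 2 * b + b ^ 2 := by
  simp [kroneckerNum, rectSum, kroneckerCoeff, sum_range_succ]
  ring

theorem kroneckerNum_eq_triangle (n : ℕ) :
    kroneckerNum a b n = b ^ (n + 1) +
      ∑ q ∈ range (n + 1), ∑ r ∈ range (n + 1 - q),
        kroneckerCoeff n q r • (a ^ q * b ^ r) := by
  have hrow : ∀ q, ∑ r ∈ range (n + 2), kroneckerCoeff n q r • (a ^ q * b ^ r) =
      ∑ r ∈ range (n + 1 - q), kroneckerCoeff n q r • (a ^ q * b ^ r) +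
        kroneckerCoeff n q (n + 1) • (a ^ q * b ^ (n + 1)) := by
    intro q
    rw [← sum_range_add_sum_Ico _ (by omega : n + 1 - q ≤ n + 2)]
    congr 1
    refine sum_eq_single_of_mem _ (by simp) fun r hr hne => ?_
    rw [mem_Ico] at hr
    rw [kroneckerCoeff_eq_zero_iff.2 (by omega), zero_smul]
  have hlast : ∑ q ∈ range (n + 2), kroneckerCoeff n q (n + 1) • (a ^ q * b ^ (n + 1)) =
      b ^ (n + 1) := by
    rw [sum_range_succ', sum_eq_zero fun q _ => by
      rw [kroneckerCoeff_eq_zero_iff.2 (by omega), zero_smul]]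
    simp [kroneckerCoeff]
  rw [kroneckerNum, rectSum, sum_congr rfl fun q _ => hrow q, sum_add_distrib, hlast,
    sum_range_succ, Nat.sub_self, sum_range_zero, add_zero, add_comm]

end KroneckerNum

theorem eq_of_two_step_recurrence {R : Type*} [Semiring R] {u v : ℕ → R} (α β : R)
    (hu : ∀ n, u (n + 2) = α * u (n + 1) + β * u n)
    (hv : ∀ n, v (n + 2) = α * v (n + 1) + β * v n) (h₀ : u 0 = v 0) (h₁ : u 1 = v 1) :
    u = v := by
  funext n
  induction n using Nat.twoStepInduction with
  | zero => exact h₀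
  | one => exact h₁
  | more n ih₀ ih₁ => rw [hu, hv, ih₀, ih₁]

section Exchange

variable {R : Type*} [CommRing R] {x : ℤ → R}

theorem exchange_cross (hrec : ∀ m : ℤ, x (m - 1) * x (m + 1) = x m ^ 2 + 1) (m : ℤ) :
    x (m + 1) * (x (m + 1) + x (m - 1)) = x m * (x m + x (m + 2)) := by
  have h₁ := hrec (m + 1)
  rw [add_sub_cancel_right, add_assoc, one_add_one_eq_two] at h₁
  linear_combination hrec m - h₁

theorem exchange_linear [IsDomain R] (hrec : ∀ m : ℤ, x (m - 1) * x (m + 1) = x m ^ 2 + 1)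
    (hxnz : ∀ m : ℤ, x m ≠ 0) (n : ℕ) :
    (x (n + 3) + x (n + 1)) * x 2 = (x 3 + x 1) * x (n + 2) := by
  induction n with
  | zero => simp
  | succ n ih =>
    have hcross := exchange_cross hrec ((n : ℤ) + 2)
    refine mul_right_cancel₀ (hxnz ((n : ℤ) + 2)) ?_
    push_cast
    ring_nf at hcross ih ⊢
    linear_combination x (3 + n) * ih - x 2 * hcross

theorem exchange_mul_pow_eq_kroneckerNum [IsDomain R]
    (hrec : ∀ m : ℤ, x (m - 1) * x (m + 1) = x m ^ 2 + 1) (hxnz : ∀ m : ℤ, x m ≠ 0)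
    (n : ℕ) : x (n + 3) * (x 1 ^ (n + 1) * x 2 ^ n) = kroneckerNum (x 1 ^ 2) (x 2 ^ 2) n := by
  have hx3 : x 1 * x 3 = x 2 ^ 2 + 1 := by simpa using hrec 2
  have hlin := exchange_linear hrec hxnz
  refine congrFun (eq_of_two_step_recurrence
    (u := fun n : ℕ => x (n + 3) * (x 1 ^ (n + 1) * x 2 ^ n))
    (1 + x 1 ^ 2 + x 2 ^ 2) (-(x 1 ^ 2 * x 2 ^ 2)) (fun n => ?_) (fun n => ?_) ?_ ?_) n
  · have h := hlin (n + 2)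
    push_cast at h ⊢
    ring_nf at h ⊢
    linear_combination (x 1 ^ (n + 3) * x 2 ^ (n + 1)) * h +
      (x 1 ^ (n + 2) * x 2 ^ (n + 1) * x (4 + n)) * hx3
  · linear_combination kroneckerNum_add_two (x 1 ^ 2) (x 2 ^ 2) n
  · rw [kroneckerNum_zero]
    push_cast
    linear_combination hx3
  · have h := hlin 1
    norm_num at h
    rw [kroneckerNum_one]
    norm_num
    linear_combination x 1 ^ 2 * h + (x 1 * x 3 + x 2 ^ 2 + 1 + x 1 ^ 2) * hx3

end Exchange

theorem X1_ne_zero : X1 ≠ 0 := by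
  simp [X1, MvPolynomial.X_ne_zero]

theorem X2_ne_zero : X2 ≠ 0 := by
  simp [X2, MvPolynomial.X_ne_zero]

theorem xn_formula (x : ℤ → K) (hx1 : x 1 = X1) (hx2 : x 2 = X2)
    (hxnz : ∀ m : ℤ, x m ≠ 0)
    (hrec : ∀ m : ℤ, x (m - 1) * x (m + 1) = x m ^ 2 + 1) :
    ∀ n : ℕ, x ((n : ℤ) + 3) =
      X1⁻¹ ^ (n + 1) * X2⁻¹ ^ n *
        (X2 ^ (2 * (n + 1)) +
          ∑ q ∈ Finset.range (n + 1), ∑ r ∈ Finset.range (n + 1 - q),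
            ((n - r).choose q * (n + 1 - q).choose r : ℚ) • (X1 ^ (2 * q) * X2 ^ (2 * r))) := by
  intro n
  have hnum := exchange_mul_pow_eq_kroneckerNum hrec hxnz n
  rw [hx1, hx2] at hnum
  have hx : x (n + 3) =
      X1⁻¹ ^ (n + 1) * X2⁻¹ ^ n * (x (n + 3) * (X1 ^ (n + 1) * X2 ^ n)) := by
    rw [inv_pow, inv_pow]
    field_simp [X1_ne_zero, X2_ne_zero]
  rw [hx, hnum, kroneckerNum_eq_triangle, ← pow_mul, mul_comm 2 (n + 1)]
  congr 3 with q
  refine Finset.sum_congr rfl fun r _ => ?_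
  rw [kroneckerCoeff, ← pow_mul, ← pow_mul, mul_comm 2 q, mul_comm 2 r,
    ← Nat.cast_smul_eq_nsmul ℚ]
  push_cast
  rfl
end

section
/- For every n ≥ 0, s_n = x_1^{-n} x_2^{-n} Σ_{q+r ≤ n} C(n-r, q) C(n-q, r) x_1^{2q} x_2^{2r}, where C denotes the binomial coefficient. -/
lemma Kzero_smul (k : K) : (0:ℚ) • k = 0 := zero_smul ℚ k
lemma Kone_smul (k : K) : (1:ℚ) • k = k := one_smul ℚ k
lemma Kadd_smul (a b : ℚ) (k : K) : (a+b) • k = a • k + b • k := add_smul a b k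
lemma Ksub_smul (a b : ℚ) (k : K) : (a-b) • k = a • k - b • k := sub_smul a b k
lemma Kmul_smul_comm (a : ℚ) (g h : K) : g * (a • h) = a • (g * h) := mul_smul_comm a g h

def bco (n q r : ℕ) : ℚ := ((n - r).choose q * (n - q).choose r : ℕ)

lemma bco_eq_zero {n q r : ℕ} (h : n < q + r) : bco n q r = 0 := by
  unfold bco
  rcases Nat.lt_or_ge (n - r) q with h1 | h1
  · simp [Nat.choose_eq_zero_of_lt h1]
  · have h2 : n - q < r := by omega
    simp [Nat.choose_eq_zero_of_lt h2]

noncomputable def mono (q r : ℕ) : K := X1 ^ (2*q) * X2 ^ (2*r)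

noncomputable def Tb (n M : ℕ) : K :=
  ∑ q ∈ Finset.range M, ∑ r ∈ Finset.range M, bco n q r • mono q r

lemma choose_key (n q r : ℕ) :
    (n+1-r).choose (q+1) * (n+1-q).choose (r+1) + (n-r).choose q * (n-q).choose r
    = (n-r).choose q * (n+1-q).choose (r+1) + (n+1-r).choose (q+1) * (n-q).choose r
      + (n-r).choose (q+1) * (n-q).choose (r+1) := by
  rcases le_or_gt r n with hr | hr
  · rcases le_or_gt q n with hq | hq
    · have h1 : n + 1 - r = (n - r) + 1 := by omega
      have h2 : n + 1 - q = (n - q) + 1 := by omega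
      rw [h1, h2, Nat.choose_succ_succ, Nat.choose_succ_succ]
      ring
    · have e1 : n + 1 - r < q + 1 := by omega
      have e2 : n - r < q := by omega
      have e3 : n - r < q + 1 := by omega
      simp [Nat.choose_eq_zero_of_lt e1, Nat.choose_eq_zero_of_lt e2,
        Nat.choose_eq_zero_of_lt e3]
  · have e1 : n + 1 - r < q + 1 := by omega
    have e2 : n - q < r := by omega
    have e3 : n + 1 - q < r + 1 := by omega
    have e4 : n - q < r + 1 := by omega
    simp [Nat.choose_eq_zero_of_lt e1, Nat.choose_eq_zero_of_lt e2,
      Nat.choose_eq_zero_of_lt e3, Nat.choose_eq_zero_of_lt e4]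

lemma bco_key (n q r : ℕ) :
    bco (n+2) q r + (if q = 0 then 0 else if r = 0 then 0 else bco n (q-1) (r-1))
    = (if q = 0 then 0 else bco (n+1) (q-1) r)
      + (if r = 0 then 0 else bco (n+1) q (r-1)) + bco (n+1) q r := by
  match q, r with
  | 0, 0 => simp [bco]
  | 0, r+1 =>
      simp only [if_pos rfl, if_neg (Nat.succ_ne_zero r), add_zero, zero_add,
        Nat.add_sub_cancel]
      unfold bco
      have h1 : n + 2 - (r+1) = n + 1 - r := by omega
      have h2 : n + 1 - (r+1) = n - r := by omega
      rw [h1, h2]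
      push_cast
      have : (n+2).choose (r+1) = (n+1).choose r + (n+1).choose (r+1) :=
        Nat.choose_succ_succ (n+1) r
      simp [Nat.choose_zero_right, this]
  | q+1, 0 =>
      simp only [if_pos rfl, if_neg (Nat.succ_ne_zero q), add_zero, zero_add,
        Nat.add_sub_cancel]
      unfold bco
      have h1 : n + 2 - (q+1) = n + 1 - q := by omega
      have h2 : n + 1 - (q+1) = n - q := by omega
      rw [h1, h2]
      have : (n+2).choose (q+1) = (n+1).choose q + (n+1).choose (q+1) :=
        Nat.choose_succ_succ (n+1) q
      simp [Nat.choose_zero_right, this]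
  | q+1, r+1 =>
      simp only [if_neg (Nat.succ_ne_zero q), if_neg (Nat.succ_ne_zero r),
        Nat.add_sub_cancel]
      unfold bco
      have h1 : n + 2 - (r+1) = n + 1 - r := by omega
      have h2 : n + 2 - (q+1) = n + 1 - q := by omega
      have h3 : n + 1 - (r+1) = n - r := by omega
      have h4 : n + 1 - (q+1) = n - q := by omega
      rw [h1, h2, h3, h4]
      exact_mod_cast congrArg (Nat.cast : ℕ → ℚ) (choose_key n q r)
lemma shift_sum (M : ℕ) (f : ℕ → ℚ) (g : ℕ → K) (hf : f M = 0) :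
    ∑ q ∈ Finset.range (M+1), f q • g (q+1)
      = ∑ q ∈ Finset.range (M+1), (if q = 0 then (0:ℚ) else f (q-1)) • g q := by
  rw [Finset.sum_range_succ, hf, Finset.sum_range_succ'
    (fun q => (if q = 0 then (0:ℚ) else f (q-1)) • g q)]
  simp [Kzero_smul]

lemma shiftQ (M : ℕ) (f : ℕ → ℕ → ℚ) (g : ℕ → ℕ → K) (hf : ∀ r, f M r = 0) :
    ∑ q ∈ Finset.range (M+1), ∑ r ∈ Finset.range (M+1), f q r • g (q+1) r
      = ∑ q ∈ Finset.range (M+1), ∑ r ∈ Finset.range (M+1),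
          (if q = 0 then (0:ℚ) else f (q-1) r) • g q r := by
  rw [Finset.sum_comm, Finset.sum_comm
    (f := fun q r => (if q = 0 then (0:ℚ) else f (q-1) r) • g q r)]
  refine Finset.sum_congr rfl fun r _ => ?_
  exact shift_sum M (fun q => f q r) (fun q => g q r) (hf r)

lemma shiftR (M : ℕ) (f : ℕ → ℕ → ℚ) (g : ℕ → ℕ → K) (hf : ∀ q, f q M = 0) :
    ∑ q ∈ Finset.range (M+1), ∑ r ∈ Finset.range (M+1), f q r • g q (r+1)
      = ∑ q ∈ Finset.range (M+1), ∑ r ∈ Finset.range (M+1),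
          (if r = 0 then (0:ℚ) else f q (r-1)) • g q r := by
  refine Finset.sum_congr rfl fun q _ => ?_
  exact shift_sum M (fun r => f q r) (fun r => g q r) (hf q)

lemma shiftQR (M : ℕ) (f : ℕ → ℕ → ℚ) (g : ℕ → ℕ → K)
    (hf1 : ∀ r, f M r = 0) (hf2 : ∀ q, f q M = 0) :
    ∑ q ∈ Finset.range (M+1), ∑ r ∈ Finset.range (M+1), f q r • g (q+1) (r+1)
      = ∑ q ∈ Finset.range (M+1), ∑ r ∈ Finset.range (M+1),
          (if q = 0 then (0:ℚ) else if r = 0 then (0:ℚ) else f (q-1) (r-1)) • g q r := by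
  rw [shiftR M f (fun q r => g (q+1) r) hf2,
      shiftQ M (fun q r => if r = 0 then (0:ℚ) else f q (r-1)) g
        (fun r => by simp [hf1])]

lemma mul_Tb_X1 (n M : ℕ) :
    X1^2 * Tb n M = ∑ q ∈ Finset.range M, ∑ r ∈ Finset.range M,
      bco n q r • mono (q+1) r := by
  unfold Tb
  rw [Finset.mul_sum]
  refine Finset.sum_congr rfl fun q _ => ?_
  rw [Finset.mul_sum]
  refine Finset.sum_congr rfl fun r _ => ?_
  rw [Kmul_smul_comm]
  congr 1
  unfold mono
  ring

lemma mul_Tb_X2 (n M : ℕ) :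
    X2^2 * Tb n M = ∑ q ∈ Finset.range M, ∑ r ∈ Finset.range M,
      bco n q r • mono q (r+1) := by
  unfold Tb
  rw [Finset.mul_sum]
  refine Finset.sum_congr rfl fun q _ => ?_
  rw [Finset.mul_sum]
  refine Finset.sum_congr rfl fun r _ => ?_
  rw [Kmul_smul_comm]
  congr 1
  unfold mono
  ring

lemma mul_Tb_X1X2 (n M : ℕ) :
    X1^2 * X2^2 * Tb n M = ∑ q ∈ Finset.range M, ∑ r ∈ Finset.range M,
      bco n q r • mono (q+1) (r+1) := by
  unfold Tb
  rw [Finset.mul_sum]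
  refine Finset.sum_congr rfl fun q _ => ?_
  rw [Finset.mul_sum]
  refine Finset.sum_congr rfl fun r _ => ?_
  rw [Kmul_smul_comm]
  congr 1
  unfold mono
  ring

lemma Tkey (n M : ℕ) (hM : n + 2 ≤ M) :
    Tb (n+2) (M+1) = (X1^2 + X2^2 + 1) * Tb (n+1) (M+1) - X1^2 * X2^2 * Tb n (M+1) := by
  have z1 : ∀ r, bco (n+1) M r = 0 := fun r => bco_eq_zero (by omega)
  have z2 : ∀ q, bco (n+1) q M = 0 := fun q => bco_eq_zero (by omega)
  have z3 : ∀ r, bco n M r = 0 := fun r => bco_eq_zero (by omega)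
  have z4 : ∀ q, bco n q M = 0 := fun q => bco_eq_zero (by omega)
  have step : Tb (n+2) (M+1)
      = (∑ q ∈ Finset.range (M+1), ∑ r ∈ Finset.range (M+1),
          (if q = 0 then (0:ℚ) else bco (n+1) (q-1) r) • mono q r)
        + (∑ q ∈ Finset.range (M+1), ∑ r ∈ Finset.range (M+1),
          (if r = 0 then (0:ℚ) else bco (n+1) q (r-1)) • mono q r)
        + (∑ q ∈ Finset.range (M+1), ∑ r ∈ Finset.range (M+1),
          bco (n+1) q r • mono q r)
        - (∑ q ∈ Finset.range (M+1), ∑ r ∈ Finset.range (M+1),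
          (if q = 0 then (0:ℚ) else if r = 0 then (0:ℚ) else bco n (q-1) (r-1)) • mono q r) := by
    unfold Tb
    rw [← Finset.sum_add_distrib, ← Finset.sum_add_distrib, ← Finset.sum_sub_distrib]
    refine Finset.sum_congr rfl fun q _ => ?_
    rw [← Finset.sum_add_distrib, ← Finset.sum_add_distrib, ← Finset.sum_sub_distrib]
    refine Finset.sum_congr rfl fun r _ => ?_
    have hb : bco (n+2) q r
        = ((if q = 0 then (0:ℚ) else bco (n+1) (q-1) r)
            + (if r = 0 then (0:ℚ) else bco (n+1) q (r-1)) + bco (n+1) q r)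
          - (if q = 0 then (0:ℚ) else if r = 0 then (0:ℚ) else bco n (q-1) (r-1)) := by
      have := bco_key n q r
      linarith
    rw [hb, Ksub_smul, Kadd_smul, Kadd_smul]
  rw [step, ← shiftQ M (fun q r => bco (n+1) q r) mono z1,
      ← shiftR M (fun q r => bco (n+1) q r) mono z2,
      ← shiftQR M (fun q r => bco n q r) mono z3 z4,
      ← mul_Tb_X1, ← mul_Tb_X2, ← mul_Tb_X1X2]
  unfold Tb
  ring

lemma triangle (n M : ℕ) (h : n < M) :
    (∑ q ∈ Finset.range (n+1), ∑ r ∈ Finset.range (n+1-q), bco n q r • mono q r)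
      = Tb n M := by
  unfold Tb
  have inner : ∀ q ≤ n,
      (∑ r ∈ Finset.range (n+1-q), bco n q r • mono q r)
        = ∑ r ∈ Finset.range M, bco n q r • mono q r := by
    intro q hq
    refine Finset.sum_subset (Finset.range_subset_range.mpr (by omega)) ?_
    intro r _ hr
    rw [Finset.mem_range] at hr
    rw [bco_eq_zero (by omega), Kzero_smul]
  calc (∑ q ∈ Finset.range (n+1), ∑ r ∈ Finset.range (n+1-q), bco n q r • mono q r)
      = ∑ q ∈ Finset.range (n+1), ∑ r ∈ Finset.range M, bco n q r • mono q r := by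
        refine Finset.sum_congr rfl fun q hq => ?_
        exact inner q (by rw [Finset.mem_range] at hq; omega)
    _ = ∑ q ∈ Finset.range M, ∑ r ∈ Finset.range M, bco n q r • mono q r := by
        refine Finset.sum_subset (Finset.range_subset_range.mpr (by omega)) ?_
        intro q _ hq
        rw [Finset.mem_range] at hq
        refine Finset.sum_eq_zero fun r _ => ?_
        rw [bco_eq_zero (by omega), Kzero_smul]
lemma triangle' (n M : ℕ) (h : n < M) :
    (∑ q ∈ Finset.range (n + 1), ∑ r ∈ Finset.range (n + 1 - q),
        ((n - r).choose q * (n - q).choose r : ℚ) • (X1 ^ (2 * q) * X2 ^ (2 * r)))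
      = Tb n M := by
  rw [← triangle n M h]
  refine Finset.sum_congr rfl fun q _ => Finset.sum_congr rfl fun r _ => ?_
  unfold bco mono
  norm_cast

theorem sn_formula (x : ℤ → K) (hx1 : x 1 = X1) (hx2 : x 2 = X2)
    (hxnz : ∀ m : ℤ, x m ≠ 0)
    (hrec : ∀ m : ℤ, x (m - 1) * x (m + 1) = x m ^ 2 + 1)
    (s : ℤ → K) (hsm1 : s (-1) = 0) (hs0 : s 0 = 1)
    (hs1 : s 1 = x 0 * x 3 - x 1 * x 2)
    (hsrec : ∀ n : ℤ, 2 ≤ n → s n = s 1 * s (n - 1) - s (n - 2)) :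
    ∀ n : ℕ, s (n : ℤ) =
      X1⁻¹ ^ n * X2⁻¹ ^ n *
        ∑ q ∈ Finset.range (n + 1), ∑ r ∈ Finset.range (n + 1 - q),
          ((n - r).choose q * (n - q).choose r : ℚ) • (X1 ^ (2 * q) * X2 ^ (2 * r)) := by
  have hX1 : X1 ≠ 0 := by rw [← hx1]; exact hxnz 1
  have hX2 : X2 ≠ 0 := by rw [← hx2]; exact hxnz 2
  have h1 := hrec 1
  have h2 := hrec 2
  norm_num at h1 h2
  rw [hx1, hx2] at h1 h2
  have hs1v : s 1 = (X1^2 + X2^2 + 1) * (X1⁻¹ * X2⁻¹) := by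
    rw [hs1, hx1, hx2]
    field_simp
    linear_combination X1 * x 3 * h1 + (X1^2 + 1) * h2
  intro n
  induction n using Nat.twoStepInduction with
  | zero =>
      norm_num [hs0, Finset.sum_range_one, Kone_smul]
  | one =>
      rw [show ((1:ℕ):ℤ) = 1 by norm_num, hs1v]
      simp [Finset.sum_range_succ, Finset.sum_range_one, Kone_smul]
      field_simp
      ring
  | more n ih1 ih2 =>
      have hrecn := hsrec ((n:ℤ)+2) (by omega)
      have e1 : (n:ℤ)+2-1 = (n:ℤ)+1 := by ring
      have e2 : (n:ℤ)+2-2 = (n:ℤ) := by ring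
      rw [e1, e2] at hrecn
      rw [show (((n+2:ℕ)):ℤ) = (n:ℤ)+2 by push_cast; ring, hrecn, hs1v, ih1,
        show ((n:ℤ)+1) = ((n+1:ℕ):ℤ) by push_cast; ring, ih2]
      rw [triangle' (n+2) (n+3) (by omega), triangle' (n+1) (n+3) (by omega),
        triangle' n (n+3) (by omega)]
      have tk := Tkey n (n+2) (by omega)
      rw [show (n+2)+1 = n+3 by omega] at tk
      rw [tk]
      simp only [pow_succ]
      have c1 : X1 * X1⁻¹ = 1 := mul_inv_cancel₀ hX1
      have c2 : X2 * X2⁻¹ = 1 := mul_inv_cancel₀ hX2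
      linear_combination (X1⁻¹^n * X2⁻¹^n * Tb n (n+3)) * ((X1*X1⁻¹)^2*(X2*X2⁻¹+1)) * c2
        + (X1⁻¹^n * X2⁻¹^n * Tb n (n+3)) * (X1*X1⁻¹+1) * c1
end

section
/- For all n ≥ 0, s_n is a Laurent polynomial in x_1 and x_2 with nonnegative integer coefficients. -/
set_option synthInstance.maxHeartbeats 1000000
set_option maxHeartbeats 1000000

noncomputable def phi : MvPolynomial (Fin 2) ℕ →+* K :=
  (algebraMap (MvPolynomial (Fin 2) ℚ) K).comp (MvPolynomial.map (Nat.castRingHom ℚ))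

lemma phiX0 : phi (MvPolynomial.X 0) = X1 := by
  rw [phi, RingHom.comp_apply, MvPolynomial.map_X]; rfl

lemma phiX1 : phi (MvPolynomial.X 1) = X2 := by
  rw [phi, RingHom.comp_apply, MvPolynomial.map_X]; rfl

noncomputable def w : ℕ → MvPolynomial (Fin 2) ℕ × MvPolynomial (Fin 2) ℕ
  | 0 => (1, MvPolynomial.X 1 ^ 2 + 1)
  | n + 1 => (MvPolynomial.X 0 ^ 2 * (w n).1 + (w n).2,
      MvPolynomial.X 0 ^ 2 * (w n).1 + (MvPolynomial.X 1 ^ 2 + 1) * (w n).2)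

lemma phiW1 : phi (w 1).1 = X1 ^ 2 + X2 ^ 2 + 1 := by
  simp only [w, map_add, map_mul, map_pow, map_one, phiX0, phiX1]
  ring

lemma hUrec (n : ℕ) : phi (w (n + 2)).1 =
    (X1 ^ 2 + X2 ^ 2 + 1) * phi (w (n + 1)).1 - X1 ^ 2 * X2 ^ 2 * phi (w n).1 := by
  simp only [w, map_add, map_mul, map_pow, map_one, phiX0, phiX1]
  ring

theorem sn_positive_laurent (x : ℤ → K) (hx1 : x 1 = X1) (hx2 : x 2 = X2)
    (hxnz : ∀ m : ℤ, x m ≠ 0)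
    (hrec : ∀ m : ℤ, x (m - 1) * x (m + 1) = x m ^ 2 + 1)
    (s : ℤ → K) (hsm1 : s (-1) = 0) (hs0 : s 0 = 1)
    (hs1 : s 1 = x 0 * x 3 - x 1 * x 2)
    (hsrec : ∀ n : ℤ, 2 ≤ n → s n = s 1 * s (n - 1) - s (n - 2)) :
    ∀ n : ℕ, ∃ (p : MvPolynomial (Fin 2) ℕ) (a b : ℕ),
      X1 ^ a * X2 ^ b * s (n : ℤ) =
        algebraMap (MvPolynomial (Fin 2) ℚ) K (p.map (Nat.castRingHom ℚ)) := by
  have h1 := hrec 1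
  have h2 := hrec 2
  norm_num at h1 h2
  rw [hx1, hx2] at h1 h2 hs1
  -- key fact: X1 * X2 * s 1 = X1^2 + X2^2 + 1
  have hkey : X1 * X2 * s 1 = X1 ^ 2 + X2 ^ 2 + 1 := by
    rw [hs1]
    linear_combination X1 * x 3 * h1 + (X1 ^ 2 + 1) * h2
  have main : ∀ n : ℕ, (X1 ^ n * X2 ^ n * s (n : ℤ) = phi (w n).1) ∧
      (X1 ^ (n + 1) * X2 ^ (n + 1) * s ((n : ℤ) + 1) = phi (w (n + 1)).1) := by
    intro n
    induction n with
    | zero =>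
      refine ⟨by simp [w, hs0], ?_⟩
      rw [phiW1]
      norm_num
      exact hkey
    | succ n ih =>
      refine ⟨by push_cast; exact ih.2, ?_⟩
      have hr := hsrec ((n : ℤ) + 2) (by linarith)
      norm_num at hr
      have e1 : (n : ℤ) + 2 - 1 = (n : ℤ) + 1 := by ring
      rw [e1] at hr
      push_cast
      have e2 : (n : ℤ) + 1 + 1 = (n : ℤ) + 2 := by ring
      rw [e2, hr, hUrec n]
      linear_combination (X1 ^ (n + 1) * X2 ^ (n + 1) * s ((n : ℤ) + 1)) * hkey +
        (X1 ^ 2 + X2 ^ 2 + 1) * ih.2 - X1 ^ 2 * X2 ^ 2 * ih.1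
  intro n
  exact ⟨(w n).1, n, n, (main n).1⟩
end

section
/- The field automorphism of ℚ(x_1, x_2) interchanging x_1 and x_2 maps x_m to x_{3-m} for every m ∈ ℤ. -/
/-!
The exchange relation `x (m - 1) * x (m + 1) = x m ^ 2 + 1` is invariant under `m ↦ 3 - m` and
under ring automorphisms, and a nowhere-vanishing solution is determined by two consecutive
values. So `m ↦ σ (x m)` and `m ↦ x (3 - m)` are solutions that agree at `1` and `2`, hence
everywhere.
-/

def SatisfiesExchangeRelation {R : Type*} [CommSemiring R] (x : ℤ → R) : Prop :=
  ∀ m : ℤ, x (m - 1) * x (m + 1) = x m ^ 2 + 1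

namespace SatisfiesExchangeRelation

variable {R S : Type*} [CommSemiring R] [CommSemiring S] {x : ℤ → R}

theorem reflect (hx : SatisfiesExchangeRelation x) (k : ℤ) :
    SatisfiesExchangeRelation fun m => x (k - m) := by
  intro m
  show x (k - (m - 1)) * x (k - (m + 1)) = x (k - m) ^ 2 + 1
  rw [← hx (k - m), mul_comm]
  congr 2 <;> ring

theorem map (hx : SatisfiesExchangeRelation x) (f : R →+* S) :
    SatisfiesExchangeRelation fun m => f (x m) := by
  intro m
  rw [← map_mul, hx m, map_add, map_pow, map_one]

theorem eq_of_eq_of_eq_add_one [IsCancelMulZero R] {y : ℤ → R}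
    (hx : SatisfiesExchangeRelation x) (hy : SatisfiesExchangeRelation y) (hx0 : ∀ m, x m ≠ 0) (n : ℤ)
    (hn : x n = y n) (hn1 : x (n + 1) = y (n + 1)) : x = y := by
  suffices h : ∀ k, x k = y k ∧ x (k + 1) = y (k + 1) from funext fun k => (h k).1
  intro k
  induction k using Int.inductionOn' (b := n) with
  | zero => exact ⟨hn, hn1⟩
  | succ k _ ih =>
    refine ⟨ih.2, mul_left_cancel₀ (hx0 k) ?_⟩
    have hxk := hx (k + 1)
    have hyk := hy (k + 1)
    rw [add_sub_cancel_right] at hxk hyk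
    rw [hxk, ih.1, ih.2, hyk]
  | pred k _ ih =>
    refine ⟨mul_right_cancel₀ (hx0 (k + 1)) ?_, by rw [sub_add_cancel]; exact ih.1⟩
    rw [hx k, ih.1, ← hy k, ih.2]

end SatisfiesExchangeRelation

theorem automorphism_symmetry (x : ℤ → K) (hx1 : x 1 = X1) (hx2 : x 2 = X2)
    (hxnz : ∀ m : ℤ, x m ≠ 0)
    (hrec : ∀ m : ℤ, x (m - 1) * x (m + 1) = x m ^ 2 + 1)
    (σ : K ≃+* K) (hσ1 : σ X1 = X2) (hσ2 : σ X2 = X1) :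
    ∀ m : ℤ, σ (x m) = x (3 - m) := by
  have hx : SatisfiesExchangeRelation x := hrec
  have h := (hx.reflect 3).eq_of_eq_of_eq_add_one (hx.map σ.toRingHom) (fun m => hxnz (3 - m)) 1
    (by simp [hx1, hx2, hσ1]) (by norm_num [hx1, hx2, hσ2])
  exact fun m => (congrFun h m).symm
end

section
/- For indeterminates u, v and N = 2n+1, the Fibonacci polynomial specializes as F(w_1,...,w_{2n+1})|_{w_{2k-1}=v, w_{2k}=u} = v^{n+1} + Σ_{q+r≤n} C(n-r,q) C(n+1-q,r) u^q v^r. -/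
open Finset

section Aux

variable {R : Type*} [CommRing R]

lemma fibPoly_zero (w : ℕ → R) : fibPoly w 0 = 1 := by
  rw [fibPoly]
  rw [show (Finset.Icc 1 0).powerset.filter (fun D => ∀ k ∈ D, k + 1 ∉ D) = {∅} by decide]
  simp

lemma fibPoly_one (w : ℕ → R) : fibPoly w 1 = 1 + w 1 := by
  rw [fibPoly]
  rw [show (Finset.Icc 1 1).powerset.filter (fun D => ∀ k ∈ D, k + 1 ∉ D) = {∅, {1}} by decide]
  rw [Finset.sum_insert (by decide), Finset.sum_singleton, Finset.prod_empty,
    Finset.prod_singleton]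

lemma fibPoly_rec (w : ℕ → R) (N : ℕ) :
    fibPoly w (N + 2) = fibPoly w (N + 1) + w (N + 2) * fibPoly w N := by
  classical
  rw [fibPoly, fibPoly, fibPoly]
  rw [← Finset.sum_filter_add_sum_filter_not
    ((Finset.Icc 1 (N+2)).powerset.filter (fun D => ∀ k ∈ D, k + 1 ∉ D))
    (fun D => N + 2 ∉ D)]
  congr 1
  · apply Finset.sum_congr _ (fun _ _ => rfl)
    ext D
    simp only [Finset.mem_filter, Finset.mem_powerset]
    constructor
    · rintro ⟨⟨hsub, hind⟩, hnot⟩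
      refine ⟨fun k hk => ?_, hind⟩
      have h1 := hsub hk
      rw [Finset.mem_Icc] at h1 ⊢
      have h2 : k ≠ N + 2 := fun h => hnot (h ▸ hk)
      omega
    · rintro ⟨hsub, hind⟩
      refine ⟨⟨fun k hk => ?_, hind⟩, fun h => ?_⟩
      · have := hsub hk; rw [Finset.mem_Icc] at this ⊢; omega
      · have := hsub h; rw [Finset.mem_Icc] at this; omega
  · rw [Finset.mul_sum]
    refine Finset.sum_bij' (fun D _ => D.erase (N+2)) (fun D _ => insert (N+2) D)
      ?hi ?hj ?left ?right ?h
    case hi =>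
      intro D hD
      simp only [Finset.mem_filter, Finset.mem_powerset, not_not] at hD
      obtain ⟨⟨hsub, hind⟩, hmem⟩ := hD
      simp only [Finset.mem_filter, Finset.mem_powerset]
      constructor
      · intro k hk
        rw [Finset.mem_erase] at hk
        have h1 := hsub hk.2
        rw [Finset.mem_Icc] at h1 ⊢
        have h2 : k ≠ N + 1 := by
          intro h; exact hind k hk.2 (by rw [h]; exact hmem)
        omega
      · intro k hk
        rw [Finset.mem_erase] at hk
        intro hk1
        exact hind k hk.2 (Finset.mem_of_mem_erase hk1)
    case hj =>
      intro D hD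
      simp only [Finset.mem_filter, Finset.mem_powerset] at hD
      obtain ⟨hsub, hind⟩ := hD
      simp only [Finset.mem_filter, Finset.mem_powerset, not_not]
      refine ⟨⟨fun k hk => ?_, fun k hk => ?_⟩, Finset.mem_insert_self _ _⟩
      · rw [Finset.mem_insert] at hk
        rw [Finset.mem_Icc]
        rcases hk with h | h
        · omega
        · have := hsub h; rw [Finset.mem_Icc] at this; omega
      · rw [Finset.mem_insert] at hk
        intro hk1
        rw [Finset.mem_insert] at hk1
        rcases hk with h | h
        · rcases hk1 with h1 | h1
          · omega
          · have := hsub h1; rw [Finset.mem_Icc] at this; omega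
        · have := hsub h; rw [Finset.mem_Icc] at this
          rcases hk1 with h1 | h1
          · omega
          · exact hind k h h1
    case left =>
      intro D hD
      simp only [Finset.mem_filter, Finset.mem_powerset, not_not] at hD
      exact Finset.insert_erase hD.2
    case right =>
      intro D hD
      simp only [Finset.mem_filter, Finset.mem_powerset] at hD
      apply Finset.erase_insert
      intro h
      have := hD.1 h; rw [Finset.mem_Icc] at this; omega
    case h =>
      intro D hD
      simp only [Finset.mem_filter, Finset.mem_powerset, not_not] at hD
      exact (Finset.mul_prod_erase D w hD.2).symm

/-- coefficient for odd length -/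
def ca (n q r : ℕ) : ℕ := (n - r).choose q * (n + 1 - q).choose r
/-- coefficient for even length -/
def cb (n q r : ℕ) : ℕ := (n - r).choose q * (n - q).choose r

def Sa (u v : R) (n : ℕ) : R :=
  ∑ q ∈ range (n + 2), ∑ r ∈ range (n + 2), ca n q r • (u ^ q * v ^ r)

def Sb (u v : R) (n : ℕ) : R :=
  ∑ q ∈ range (n + 2), ∑ r ∈ range (n + 2), cb n q r • (u ^ q * v ^ r)

lemma key1 (n q r : ℕ) :
    cb (n + 1) q r = ca n q r + (match q with | 0 => 0 | q' + 1 => cb n q' r) := by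
  rcases q with _ | q'
  · simp [ca, cb]
  · show cb (n+1) (q'+1) r = ca n (q'+1) r + cb n q' r
    unfold ca cb
    have h1 : n + 1 - (q' + 1) = n - q' := by omega
    rw [h1]
    rcases le_or_gt r n with hr | hr
    · have h2 : n + 1 - r = (n - r) + 1 := by omega
      rw [h2, Nat.choose_succ_succ]
      ring
    · have h3 : (n - q').choose r = 0 := Nat.choose_eq_zero_of_lt (by omega)
      rw [h3]; ring

lemma key2 (n q r : ℕ) :
    ca (n + 1) q r = cb (n + 1) q r + (match r with | 0 => 0 | r' + 1 => ca n q r') := by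
  rcases r with _ | r'
  · simp [ca, cb]
  · show ca (n+1) q (r'+1) = cb (n+1) q (r'+1) + ca n q r'
    unfold ca cb
    have h1 : n + 1 - (r' + 1) = n - r' := by omega
    rw [h1]
    rcases le_or_gt q (n+1) with hq | hq
    · have h2 : n + 2 - q = (n + 1 - q) + 1 := by omega
      rw [h2, Nat.choose_succ_succ]
      ring
    · have h3 : (n - r').choose q = 0 := Nat.choose_eq_zero_of_lt (by omega)
      rw [h3]; ring

lemma grid_ext (f : ℕ → ℕ → R) (m : ℕ)
    (h1 : ∀ r < m + 1, f m r = 0) (h2 : ∀ q < m, f q m = 0) :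
    ∑ q ∈ range m, ∑ r ∈ range m, f q r
      = ∑ q ∈ range (m + 1), ∑ r ∈ range (m + 1), f q r := by
  rw [Finset.sum_range_succ (f := fun q => ∑ r ∈ range (m+1), f q r)]
  rw [Finset.sum_eq_zero (fun r hr => h1 r (mem_range.mp hr)), add_zero]
  exact Finset.sum_congr rfl fun q hq => by
    rw [Finset.sum_range_succ, h2 q (mem_range.mp hq), add_zero]

lemma ca_right_zero (n q : ℕ) : ca n q (n + 2) = 0 := by
  unfold ca
  rw [Nat.choose_eq_zero_of_lt (show n + 1 - q < n + 2 by omega)]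
  ring

lemma ca_left_zero (n r : ℕ) : ca n (n + 2) r = 0 := by
  unfold ca
  rw [Nat.choose_eq_zero_of_lt (show n - r < n + 2 by omega)]
  ring

lemma cb_right_zero (n q : ℕ) : cb n q (n + 2) = 0 := by
  unfold cb
  rw [Nat.choose_eq_zero_of_lt (show n - q < n + 2 by omega)]
  ring

lemma cb_left_zero (n r : ℕ) : cb n (n + 2) r = 0 := by
  unfold cb
  rw [Nat.choose_eq_zero_of_lt (show n - r < n + 2 by omega)]
  ring

lemma Sa_ext (u v : R) (n : ℕ) :
    Sa u v n = ∑ q ∈ range (n + 3), ∑ r ∈ range (n + 3), ca n q r • (u ^ q * v ^ r) := by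
  rw [Sa]
  exact grid_ext _ (n+2) (fun r _ => by rw [ca_left_zero]; simp)
    (fun q _ => by rw [ca_right_zero]; simp)

lemma Sb_ext (u v : R) (n : ℕ) :
    Sb u v n = ∑ q ∈ range (n + 3), ∑ r ∈ range (n + 3), cb n q r • (u ^ q * v ^ r) := by
  rw [Sb]
  exact grid_ext _ (n+2) (fun r _ => by rw [cb_left_zero]; simp)
    (fun q _ => by rw [cb_right_zero]; simp)

lemma mul_Sb (u v : R) (n : ℕ) :
    u * Sb u v n = ∑ q ∈ range (n + 3), ∑ r ∈ range (n + 3),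
      (match q with | 0 => 0 | q' + 1 => cb n q' r) • (u ^ q * v ^ r) := by
  have h0 := Finset.sum_range_succ' (f := fun q => ∑ r ∈ range (n + 3),
      (match q with | 0 => 0 | q' + 1 => cb n q' r) • (u ^ q * v ^ r)) (n+2)
  rw [show n + 3 = n + 2 + 1 from rfl, h0]
  simp only [zero_smul, Finset.sum_const_zero, add_zero]
  rw [Sb, Finset.mul_sum]
  apply Finset.sum_congr rfl
  intro q _
  rw [Finset.mul_sum]
  have h1 := Finset.sum_range_succ (f := fun r => cb n q r • (u ^ (q+1) * v ^ r)) (n+2)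
  rw [show n + 2 + 1 = n + 2 + 1 from rfl] at h1
  rw [h1, cb_right_zero, zero_smul, add_zero]
  apply Finset.sum_congr rfl
  intro r _
  rw [mul_smul_comm]
  congr 1
  rw [pow_succ']
  ring

lemma mul_Sa (u v : R) (n : ℕ) :
    v * Sa u v n = ∑ q ∈ range (n + 3), ∑ r ∈ range (n + 3),
      (match r with | 0 => 0 | r' + 1 => ca n q r') • (u ^ q * v ^ r) := by
  have hstep : ∀ q, v * (∑ r ∈ range (n + 2), ca n q r • (u ^ q * v ^ r))
      = ∑ r ∈ range (n + 3), (match r with | 0 => 0 | r' + 1 => ca n q r') • (u ^ q * v ^ r) := by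
    intro q
    have h0 := Finset.sum_range_succ' (f := fun r =>
        (match r with | 0 => 0 | r' + 1 => ca n q r') • (u ^ q * v ^ r)) (n+2)
    rw [show n + 3 = n + 2 + 1 from rfl, h0]
    simp only [zero_smul, add_zero]
    rw [Finset.mul_sum]
    apply Finset.sum_congr rfl
    intro r _
    rw [mul_smul_comm]
    congr 1
    rw [pow_succ]
    ring
  have hlast : (∑ r ∈ range (n + 3), (match r with
      | 0 => 0 | r' + 1 => ca n (n+2) r') • (u ^ (n+2) * v ^ r)) = 0 := by
    apply Finset.sum_eq_zero
    intro r _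
    rcases r with _ | r'
    · simp
    · simp [ca_left_zero]
  rw [Sa, Finset.mul_sum]
  have h1 := Finset.sum_range_succ (f := fun q => ∑ r ∈ range (n + 3),
      (match r with | 0 => 0 | r' + 1 => ca n q r') • (u ^ q * v ^ r)) (n+2)
  rw [show n + 3 = n + 2 + 1 from rfl, h1, hlast, add_zero]
  exact Finset.sum_congr rfl fun q _ => hstep q

lemma keyI (u v : R) (n : ℕ) : Sb u v (n + 1) = Sa u v n + u * Sb u v n := by
  rw [Sb, Sa_ext, mul_Sb, ← Finset.sum_add_distrib]
  apply Finset.sum_congr rfl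
  intro q _
  rw [← Finset.sum_add_distrib]
  apply Finset.sum_congr rfl
  intro r _
  rw [← add_smul, ← key1]

lemma keyII (u v : R) (n : ℕ) : Sa u v (n + 1) = Sb u v (n + 1) + v * Sa u v n := by
  rw [Sa, Sb, mul_Sa, ← Finset.sum_add_distrib]
  apply Finset.sum_congr rfl
  intro q _
  rw [← Finset.sum_add_distrib]
  apply Finset.sum_congr rfl
  intro r _
  rw [← add_smul, ← key2]

lemma main_ind (u v : R) (n : ℕ) :
    fibPoly (fun k => if k % 2 = 1 then v else u) (2 * n) = Sb u v n ∧
    fibPoly (fun k => if k % 2 = 1 then v else u) (2 * n + 1) = Sa u v n := by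
  induction n with
  | zero =>
    constructor
    · rw [show 2 * 0 = 0 by ring, fibPoly_zero, Sb]
      have : cb 0 0 0 = 1 := by decide
      simp [Finset.sum_range_succ, cb]
    · rw [show 2 * 0 + 1 = 1 by ring, fibPoly_one, Sa]
      have h : (if 1 % 2 = 1 then v else u) = v := by norm_num
      rw [h]
      simp [Finset.sum_range_succ, ca]
  | succ n ih =>
    obtain ⟨ihB, ihA⟩ := ih
    have hEven : fibPoly (fun k => if k % 2 = 1 then v else u) (2 * (n + 1)) = Sb u v (n + 1) := by
      rw [show 2 * (n + 1) = 2 * n + 2 by ring, fibPoly_rec, ihA,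
        show (if (2 * n + 2) % 2 = 1 then v else u) = u from if_neg (by omega), ihB, keyI]
    refine ⟨hEven, ?_⟩
    rw [show 2 * (n + 1) + 1 = (2 * n + 1) + 2 by ring, fibPoly_rec, ihA,
      show (if (2 * n + 1 + 2) % 2 = 1 then v else u) = v from if_pos (by omega),
      show 2 * n + 1 + 1 = 2 * (n + 1) by ring, hEven, keyII]

lemma ca_zero_of (n q r : ℕ) (hq : 1 ≤ q) (h : n < q + r) : ca n q r = 0 := by
  unfold ca
  rw [Nat.choose_eq_zero_of_lt (show n - r < q by omega)]
  ring

lemma Sa_eq_rhs (u v : R) (n : ℕ) :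
    Sa u v n = v ^ (n + 1) +
      ∑ q ∈ Finset.range (n + 1), ∑ r ∈ Finset.range (n + 1 - q),
        ((n - r).choose q * (n + 1 - q).choose r : ℕ) • (u ^ q * v ^ r) := by
  rw [Sa]
  rw [Finset.sum_range_succ (f := fun q => ∑ r ∈ range (n+2), ca n q r • (u^q * v^r))]
  rw [show ∑ r ∈ range (n+2), ca n (n+1) r • (u^(n+1) * v^r) = 0 from
    Finset.sum_eq_zero fun r _ => by
      rw [ca_zero_of n (n+1) r (by omega) (by omega)]; simp]
  rw [add_zero]
  have hsplit : ∀ q ∈ range (n + 1),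
      ∑ r ∈ range (n+2), ca n q r • (u^q * v^r)
        = (∑ r ∈ range (n+1-q), ca n q r • (u^q * v^r))
          + (if q = 0 then v ^ (n+1) else 0) := by
    intro q hq
    rw [mem_range] at hq
    have hle : n + 1 - q ≤ n + 2 := by omega
    rw [Finset.range_eq_Ico, ← Finset.sum_Ico_consecutive (fun r => ca n q r • (u^q * v^r))
      (Nat.zero_le (n+1-q)) hle, ← Finset.range_eq_Ico]
    congr 1
    rcases Nat.eq_zero_or_pos q with h0 | h0
    · subst h0
      rw [if_pos rfl]
      have : n + 1 - 0 = n + 1 := by omega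
      rw [this]
      rw [Finset.sum_Ico_succ_top (by omega : n + 1 ≤ n + 1)]
      rw [Finset.Ico_self, Finset.sum_empty, zero_add]
      have hca : ca n 0 (n+1) = 1 := by
        unfold ca; simp
      rw [hca, one_smul, pow_zero, one_mul]
    · rw [if_neg (by omega)]
      apply Finset.sum_eq_zero
      intro r hr
      rw [Finset.mem_Ico] at hr
      rw [ca_zero_of n q r h0 (by omega)]
      simp
  rw [Finset.sum_congr rfl hsplit, Finset.sum_add_distrib]
  rw [show ∑ q ∈ range (n+1), (if q = 0 then v ^ (n+1) else (0:R)) = v ^ (n+1) by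
    rw [Finset.sum_ite_eq' (range (n+1)) 0 (fun _ => v ^ (n+1))]
    rw [if_pos (mem_range.mpr (by omega))]]
  rw [add_comm]; rfl

end Aux

theorem fibPoly_odd_specialization {R : Type*} [CommRing R] (u v : R) (n : ℕ) :
    fibPoly (fun k => if k % 2 = 1 then v else u) (2 * n + 1) =
      v ^ (n + 1) +
        ∑ q ∈ Finset.range (n + 1), ∑ r ∈ Finset.range (n + 1 - q),
          ((n - r).choose q * (n + 1 - q).choose r : ℕ) • (u ^ q * v ^ r) := by
  rw [(main_ind u v n).2, Sa_eq_rhs]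
end
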